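/- arXiv:1607.05166 — 14 statements merged into one kernel-verified Lean document; each statement's English description precedes it below -/
import Mathlib

section
/- If f: S → ℂ satisfies f(xyz₀) + f(xσ(y)z₀) = 2f(x)f(y) for all x,y ∈ S, then f(σ(x)) = f(x) for all x ∈ S. -/
theorem stmt0_general {S : Type*} [Semigroup S] (σ : S → S) (hσσ : ∀ x, σ (σ x) = x)
    (z₀ : S) (f : S → ℂ) (hf : ∀ x y, f (x * y * z₀) + f (x * σ y * z₀) = 2 * f x * f y) :
    ∀ x, f (σ x) = f x := by
  intro x
  by_cases hzero : f = 0
  · simp [hzero]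
  obtain ⟨a, ha⟩ := Function.ne_iff.mp hzero
  -- The left side of the equation is unchanged when `y` is replaced by `σ y`.
  have key : 2 * f a * f (σ x) = 2 * f a * f x := by
    rw [← hf, ← hf, hσσ, add_comm]
  exact mul_left_cancel₀ (mul_ne_zero two_ne_zero ha) key

theorem stmt0 {S : Type*} [Semigroup S] (σ : S → S) (hσ : ∀ x y, σ (x * y) = σ x * σ y) (hσσ : ∀ x, σ (σ x) = x)
    (z₀ : S) (hz : ∀ x, z₀ * x = x * z₀) (f : S → ℂ) (hf : ∀ x y, f (x * y * z₀) + f (x * σ y * z₀) = 2 * f x * f y) :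
    ∀ x, f (σ x) = f x :=
  stmt0_general σ hσσ z₀ f hf
end

section
/- If f: S → ℂ satisfies f(xyz₀) + f(xσ(y)z₀) = 2f(x)f(y) for all x,y ∈ S, then f ≠ 0 if and only if f(z₀) ≠ 0. -/
/-!
Suppose `f ≠ 0` but `f z₀ = 0`. Comparing the equation at `y` and at `σ y` shows
`f x * f (σ y) = f x * f y`, so `f` is `σ`-even. Expanding `f (x * z₀ * (y * w) * z₀)` in two
ways gives `2 f(x) f(y) f(w) = f(x z₀) (f(y w) + f(y σ(w)))`, from which `f(x z₀) = λ f(x)` with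
`λ ≠ 0`. Taking `y = z₀` in that identity, `f z₀ = 0` forces `f(w z₀) + f(σ(w) z₀) = 0`, while
evenness and `f(w z₀) = λ f(w)` make the two terms equal; so `f(w z₀) = 0` for all `w`, which is
impossible for `f ≠ 0`.
-/

section Kannappan

variable {S : Type*} [Semigroup S] {σ : S → S} {z₀ : S} {f : S → ℂ}

theorem kannappan_mul_map_right (hσσ : ∀ x, σ (σ x) = x)
    (hf : ∀ x y, f (x * y * z₀) + f (x * σ y * z₀) = 2 * f x * f y) (x y : S) :
    f x * f (σ y) = f x * f y := by
  have h := hf x (σ y)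
  rw [hσσ, add_comm, hf x y] at h
  linear_combination -h / 2

theorem exists_kannappan_apply_mul_ne_zero
    (hf : ∀ x y, f (x * y * z₀) + f (x * σ y * z₀) = 2 * f x * f y) (hne : f ≠ 0) :
    ∃ u, f (u * z₀) ≠ 0 := by
  obtain ⟨a, ha⟩ := Function.ne_iff.mp hne
  by_contra! h
  have h1 := hf a a
  rw [h, h] at h1
  exact ha (mul_self_eq_zero.mp (by linear_combination -h1 / 2))

theorem kannappan_triple_product (hσ : ∀ x y, σ (x * y) = σ x * σ y) (hσσ : ∀ x, σ (σ x) = x)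
    (hz : ∀ x, z₀ * x = x * z₀)
    (hf : ∀ x y, f (x * y * z₀) + f (x * σ y * z₀) = 2 * f x * f y) (x y w : S) :
    2 * f x * f y * f w = f (x * z₀) * (f (y * w) + f (y * σ w)) := by
  have h1 := hf (x * z₀) (y * w)
  have h2 := hf (x * z₀) (y * σ w)
  have h3 := hf x y
  have h4 := hf (x * y * z₀) w
  have h5 := hf (x * σ y * z₀) w
  simp only [hσ, hσσ, mul_assoc, hz] at h1 h2 h3 h4 h5
  linear_combination (h1 + h2 - h4 - h5) / 2 - f w * h3

theorem kannappan_apply_mul_central (hσ : ∀ x y, σ (x * y) = σ x * σ y)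
    (hσσ : ∀ x, σ (σ x) = x) (hz : ∀ x, z₀ * x = x * z₀)
    (hf : ∀ x y, f (x * y * z₀) + f (x * σ y * z₀) = 2 * f x * f y) (u x y : S) :
    f u * f (x * z₀) * f y = f (u * z₀) * f x * f y := by
  have h1 := kannappan_triple_product hσ hσσ hz hf u (x * z₀) y
  have h2 := hf x y
  simp only [mul_assoc, hz] at h1 h2
  linear_combination h1 / 2 + f (u * z₀) / 2 * h2

end Kannappan

theorem stmt1 {S : Type*} [Semigroup S] (σ : S → S) (hσ : ∀ x y, σ (x * y) = σ x * σ y) (hσσ : ∀ x, σ (σ x) = x)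
    (z₀ : S) (hz : ∀ x, z₀ * x = x * z₀) (f : S → ℂ) (hf : ∀ x y, f (x * y * z₀) + f (x * σ y * z₀) = 2 * f x * f y) :
    f ≠ 0 ↔ f z₀ ≠ 0 := by
  refine ⟨fun hne hz₀ => ?_, fun h h0 => h (congrFun h0 z₀)⟩
  obtain ⟨u, hu⟩ := exists_kannappan_apply_mul_ne_zero hf hne
  have hshift (w : S) : f u * f (w * z₀) = f (u * z₀) * f w :=
    mul_right_cancel₀ hu (kannappan_apply_mul_central hσ hσσ hz hf u w (u * z₀))
  have hfu : f u ≠ 0 := fun h0 => hu <| mul_self_eq_zero.mp <| by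
    simpa [h0] using (hshift (u * z₀)).symm
  have heven : f (σ u) = f u := mul_left_cancel₀ hfu (kannappan_mul_map_right hσσ hf u u)
  have hodd : f (u * z₀) + f (σ u * z₀) = 0 := by
    have h := kannappan_triple_product hσ hσσ hz hf u z₀ u
    rw [hz, hz, hz₀] at h
    simpa [hu] using h.symm
  have hσu : f (σ u * z₀) = f (u * z₀) := by
    have h := hshift (σ u)
    rw [heven, ← hshift u] at h
    exact mul_left_cancel₀ hfu h
  exact hu (by linear_combination (hodd - hσu) / 2)
end

section
/- If f: S → ℂ satisfies f(xyz₀) + f(xσ(y)z₀) = 2f(x)f(y) for all x,y ∈ S, then f(xσ(z₀)z₀) = f(x)f(z₀) for all x ∈ S. -/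
/-!
Put `w = σ z₀`, again central, and `u = x σ(y)`. Expanding `4 f(x) f(y) f(v)` by the equation both as
`2 f(x) · 2 f(y) f(v)` and as `2 f(v) · 2 f(x) f(y)`, and recognising
`f(u v w z₀) + f(u σ(v) w z₀) = 2 f(u w) f(v)` among the terms of the first, gives
`2 f(v) (f(u z₀) - f(u w)) = 0`. Taking `f(v) ≠ 0` and `u = x z₀` gives `f(x z₀ z₀) = f(x w z₀)`,
and then the equation at `y = z₀` is the claim.
-/

section

variable {S : Type*} [Semigroup S]

theorem commute_map_of_forall_commute {σ : S → S} (hσ : ∀ x y, σ (x * y) = σ x * σ y)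
    (hσσ : ∀ x, σ (σ x) = x) {z : S} (hz : ∀ x, Commute z x) (x : S) : Commute (σ z) x := by
  simpa only [MulHom.coe_mk, hσσ] using (hz (σ x)).map (⟨σ, hσ⟩ : S →ₙ* S)

theorem mul_mul_mul_eq_mul_mul_mul_of_commute {c t : S} (h : Commute c t) (a b : S) :
    a * (b * c * t) = a * b * t * c := by
  simp only [mul_assoc, h.eq]

theorem two_mul_mul_apply_mul_sub_apply_mul_map_eq_zero {R : Type*} [CommRing R] {σ : S → S}
    (hσ : ∀ x y, σ (x * y) = σ x * σ y) (hσσ : ∀ x, σ (σ x) = x) {z₀ : S}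
    (hz : ∀ x, Commute z₀ x) {f : S → R}
    (hf : ∀ x y, f (x * y * z₀) + f (x * σ y * z₀) = 2 * f x * f y) (x y v : S) :
    2 * f v * (f (x * σ y * z₀) - f (x * σ y * σ z₀)) = 0 := by
  have hw := commute_map_of_forall_commute hσ hσσ hz
  have e₁ := hf y v
  have e₂ := hf x (y * v * z₀)
  have e₃ := hf x (y * σ v * z₀)
  have e₄ := hf x y
  have e₅ := hf (x * y * z₀) v
  have e₆ := hf (x * σ y * σ z₀) v
  simp only [hσ, hσσ] at e₂ e₃
  rw [mul_mul_mul_eq_mul_mul_mul_of_commute (hz v).symm,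
    mul_mul_mul_eq_mul_mul_mul_of_commute (hw (σ v)).symm] at e₂
  rw [mul_mul_mul_eq_mul_mul_mul_of_commute (hz (σ v)).symm,
    mul_mul_mul_eq_mul_mul_mul_of_commute (hw v).symm] at e₃
  linear_combination e₅ + e₆ - e₂ - e₃ - 2 * f x * e₁ + 2 * f v * e₄

end

theorem stmt2 {S : Type*} [Semigroup S] (σ : S → S) (hσ : ∀ x y, σ (x * y) = σ x * σ y) (hσσ : ∀ x, σ (σ x) = x)
    (z₀ : S) (hz : ∀ x, z₀ * x = x * z₀) (f : S → ℂ) (hf : ∀ x y, f (x * y * z₀) + f (x * σ y * z₀) = 2 * f x * f y) :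
    ∀ x, f (x * σ z₀ * z₀) = f x * f z₀ := by
  intro x
  by_cases hf₀ : ∀ v, f v = 0
  · simp [hf₀]
  obtain ⟨v, hv⟩ := not_forall.mp hf₀
  have key := two_mul_mul_apply_mul_sub_apply_mul_map_eq_zero hσ hσσ hz hf x (σ z₀) v
  rw [hσσ, mul_eq_zero, or_iff_right (mul_ne_zero two_ne_zero hv), sub_eq_zero,
    Commute.right_comm (hz (σ z₀))] at key
  linear_combination (hf x z₀ - key) / 2
end

section
/- If f: S → ℂ satisfies f(xyz₀) + f(xσ(y)z₀) = 2f(x)f(y) for all x,y ∈ S, then f(xz₀z₀) = f(x)f(z₀) for all x ∈ S. -/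
/-!
Write `τ = σ z₀` (central, like `z₀`). Comparing the equation at `(x, z₀)` and `(z₀, x)` gives
`f (x τ z₀) = f (σ x z₀ z₀)`, hence `f (x z₀²) + f (σ x z₀²) = 2 f(x) f(z₀)`. Expanding
`2 f(x z₀²) f(w) + 2 f(σ x τ z₀) f(w)` by the equation in `w`, and regrouping the four terms as
the last identity applied to `x w z₀` and `x σ(w) z₀`, gives `4 f(z₀) f(x) f(w)`; since
`f (σ x τ z₀) = f (x z₀²)`, this is `f (x z₀²) f(w) = f(x) f(z₀) f(w)`, and one cancels a `w`
with `f w ≠ 0`.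
-/

open Set

section Center

variable {S : Type*} [Semigroup S]

theorem map_mem_center_of_surjective {σ : S → S} (hσ : ∀ x y, σ (x * y) = σ x * σ y)
    (hsurj : Function.Surjective σ) {z : S} (hz : z ∈ center S) : σ z ∈ center S := by
  refine Semigroup.mem_center_iff.mpr fun g => ?_
  obtain ⟨a, rfl⟩ := hsurj g
  rw [← hσ, ← hσ, Semigroup.mem_center_iff.mp hz a]

theorem mul_right_comm_of_mem_center {c : S} (hc : c ∈ center S) (a b : S) :
    a * c * b = a * b * c :=
  ((mem_center_iff.mp hc).right_comm a b).symm

end Center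

section DAlembert

variable {S : Type*} [Semigroup S] {σ : S → S} {z₀ : S} {f : S → ℂ}

theorem dAlembert_mul_central
    (hf : ∀ x y, f (x * y * z₀) + f (x * σ y * z₀) = 2 * f x * f y)
    {c : S} (hc : c ∈ center S) (a w : S) :
    f (a * w * c * z₀) + f (a * σ w * c * z₀) = 2 * f (a * c) * f w := by
  rw [← mul_right_comm_of_mem_center hc, ← mul_right_comm_of_mem_center hc]
  exact hf (a * c) w

theorem dAlembert_apply_mul_map_central
    (hf : ∀ x y, f (x * y * z₀) + f (x * σ y * z₀) = 2 * f x * f y)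
    {c : S} (hc : c ∈ center S) (a : S) :
    f (a * σ c * z₀) = f (σ a * c * z₀) := by
  have hac := hf a c
  have hca := hf c a
  rw [← Semigroup.mem_center_iff.mp hc a, ← Semigroup.mem_center_iff.mp hc (σ a)] at hca
  linear_combination hac - hca

theorem dAlembert_add_map (hz : z₀ ∈ center S)
    (hf : ∀ x y, f (x * y * z₀) + f (x * σ y * z₀) = 2 * f x * f y) (a : S) :
    f (a * z₀ * z₀) + f (σ a * z₀ * z₀) = 2 * f a * f z₀ := by
  rw [← dAlembert_apply_mul_map_central hf hz]
  exact hf a z₀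

theorem dAlembert_apply_mul_sq_mul_eq (hσ : ∀ x y, σ (x * y) = σ x * σ y) (hσσ : ∀ x, σ (σ x) = x)
    (hz : z₀ ∈ center S) (hf : ∀ x y, f (x * y * z₀) + f (x * σ y * z₀) = 2 * f x * f y)
    (x w : S) : f (x * z₀ * z₀) * f w = f x * f z₀ * f w := by
  have hτ : σ z₀ ∈ center S :=
    map_mem_center_of_surjective hσ (Function.Involutive.surjective hσσ) hz
  have hx := dAlembert_mul_central hf (mul_mem_center hz hz) x w
  have hσx := dAlembert_mul_central hf (mul_mem_center hτ hz) (σ x) w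
  have hxw := dAlembert_add_map hz hf (x * w * z₀)
  have hxσw := dAlembert_add_map hz hf (x * σ w * z₀)
  have hfxw := hf x w
  have hσxτ := dAlembert_apply_mul_map_central hf hz (σ x)
  simp only [hσ, hσσ] at hxw hxσw hσxτ
  simp only [mul_assoc] at hx hσx hxw hxσw hσxτ hfxw ⊢
  linear_combination (hxw + hxσw - hx - hσx + 2 * f z₀ * hfxw - 2 * f w * hσxτ) / 4

end DAlembert

theorem stmt3 {S : Type*} [Semigroup S] (σ : S → S) (hσ : ∀ x y, σ (x * y) = σ x * σ y) (hσσ : ∀ x, σ (σ x) = x)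
    (z₀ : S) (hz : ∀ x, z₀ * x = x * z₀) (f : S → ℂ) (hf : ∀ x y, f (x * y * z₀) + f (x * σ y * z₀) = 2 * f x * f y) :
    ∀ x, f (x * z₀ * z₀) = f x * f z₀ := by
  have hz₀ : z₀ ∈ center S := Semigroup.mem_center_iff.mpr fun g => (hz g).symm
  intro x
  rcases em (∃ w, f w ≠ 0) with ⟨w, hw⟩ | hf₀
  · exact mul_right_cancel₀ hw (dAlembert_apply_mul_sq_mul_eq hσ hσσ hz₀ hf x w)
  · simp [not_exists_not.mp hf₀]
end

section
/- Let f: S → ℂ be a nonzero solution of f(xyz₀) + f(xσ(y)z₀) = 2f(x)f(y). Define g(x) = f(xz₀)/f(z₀). Then g satisfies d'Alembert's equation g(xy) + g(xσ(y)) = 2g(x)g(y) for all x,y ∈ S, g(z₀) ≠ 0, and g(xz₀) = g(x)g(z₀) for all x ∈ S. -/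
/-!
Comparing the equation at `(x z₀, y z₀)`, `(x z₀, σ(y) z₀)` with the equation at `(x y z₀, z₀)`,
`(x σ(y) z₀, z₀)` gives `f(x z₀) (f(y z₀) + f(σ(y) z₀)) = 2 f(z₀) f(x) f(y)`. If `f(z₀) ≠ 0`, this
says that right translation by `z₀` multiplies `f` by a constant `k` with `k² = f(z₀)`, so `g = f / k`
and all three claims follow from the equation. If `f(z₀) = 0`, the same identity forces
`f(σ(y) z₀) = -f(y z₀)`, and then `f(x y z₀²) = f(x z₀) f(y) + f(x) f(y z₀)`. Expanding
`f(x z₀ y z₀²) = f(x y z₀ z₀²)` in two ways shows that `x ↦ f(x z₀²)` is proportional to `f`, hence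
zero, and `f(x z₀) f(y) + f(x) f(y z₀) = 0` at `(a, a)` and `(a, b)` with `f(a) ≠ 0 ≠ f(b z₀)` is
impossible.
-/

def KannappanEq {S K : Type*} [Mul S] [Semiring K] (σ : S → S) (z₀ : S) (f : S → K) : Prop :=
  ∀ x y, f (x * y * z₀) + f (x * σ y * z₀) = 2 * f x * f y

section

variable {S K : Type*} [Semigroup S] {σ : S → S} {z₀ : S}

theorem commute_apply_of_forall_commute (hσ : ∀ x y, σ (x * y) = σ x * σ y)
    (hσσ : Function.Involutive σ) (hz : ∀ x, Commute z₀ x) (x : S) : Commute (σ z₀) x :=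
  calc σ z₀ * x = σ (z₀ * σ x) := by rw [hσ, hσσ]
    _ = σ (σ x * z₀) := by rw [(hz _).eq]
    _ = x * σ z₀ := by rw [hσ, hσσ]

namespace KannappanEq

variable [Field K] [NeZero (2 : K)] {f : S → K}

theorem apply_sigma (hf : KannappanEq σ z₀ f) (hf0 : f ≠ 0) (hσσ : Function.Involutive σ)
    (s : S) : f (σ s) = f s := by
  obtain ⟨a, ha⟩ : ∃ a, f a ≠ 0 := Function.ne_iff.mp hf0
  have h' := hf a (σ s)
  rw [hσσ] at h'
  have h : 2 * f a * f (σ s) = 2 * f a * f s := by linear_combination hf a s - h'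
  exact mul_left_cancel₀ (mul_ne_zero two_ne_zero ha) h

theorem exists_apply_mul_ne_zero (hf : KannappanEq σ z₀ f) (hf0 : f ≠ 0) :
    ∃ b, f (b * z₀) ≠ 0 := by
  by_contra! h
  refine hf0 (funext fun a => ?_)
  simpa [h, two_ne_zero] using hf a a

theorem apply_mul_mul_add_apply_sigma_mul (hf : KannappanEq σ z₀ f)
    (hσ : ∀ x y, σ (x * y) = σ x * σ y) (hσσ : Function.Involutive σ) (hz : ∀ x, Commute z₀ x)
    (x y : S) : f (x * z₀) * (f (y * z₀) + f (σ y * z₀)) = 2 * f z₀ * f x * f y := by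
  have hz' : ∀ v, x * z₀ * v = x * v * z₀ := fun v => (hz v).right_comm x
  have hτ : ∀ u v, u * σ z₀ * v = u * v * σ z₀ := fun u v =>
    (commute_apply_of_forall_commute hσ hσσ hz v).right_comm u
  have h₁ := hf (x * z₀) (y * z₀)
  have h₂ := hf (x * z₀) (σ y * z₀)
  have h₃ := hf (x * y * z₀) z₀
  have h₄ := hf (x * σ y * z₀) z₀
  simp only [hσ, hσσ _, ← mul_assoc, hz', hτ] at h₁ h₂ h₃ h₄
  refine mul_left_cancel₀ (two_ne_zero : (2 : K) ≠ 0) ?_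
  linear_combination h₃ + h₄ - h₁ - h₂ + 2 * f z₀ * hf x y

theorem apply_mul_sigma_of_apply_eq_zero (hf : KannappanEq σ z₀ f) (hf0 : f ≠ 0)
    (hσ : ∀ x y, σ (x * y) = σ x * σ y) (hσσ : Function.Involutive σ) (hz : ∀ x, Commute z₀ x)
    (h0 : f z₀ = 0) (u : S) : f (u * σ z₀) = -f (u * z₀) := by
  obtain ⟨b, hb⟩ := hf.exists_apply_mul_ne_zero hf0
  have hodd : f (σ u * z₀) = -f (u * z₀) := by
    have h := hf.apply_mul_mul_add_apply_sigma_mul hσ hσσ hz b u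
    rw [h0, mul_zero, zero_mul, zero_mul, mul_eq_zero] at h
    linear_combination h.resolve_left hb
  rw [← hf.apply_sigma hf0 hσσ (u * σ z₀), hσ, hσσ, hodd]

theorem apply_mul_mul_mul_mul_of_apply_eq_zero (hf : KannappanEq σ z₀ f) (hf0 : f ≠ 0)
    (hσ : ∀ x y, σ (x * y) = σ x * σ y) (hσσ : Function.Involutive σ) (hz : ∀ x, Commute z₀ x)
    (h0 : f z₀ = 0) (x y : S) :
    f (x * y * z₀ * z₀) = f (x * z₀) * f y + f x * f (y * z₀) := by
  have h₁ := hf (x * z₀) y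
  have h₂ := hf x (y * z₀)
  rw [(hz y).right_comm, (hz (σ y)).right_comm] at h₁
  simp only [hσ, ← mul_assoc] at h₂
  rw [(commute_apply_of_forall_commute hσ hσσ hz z₀).right_comm,
    hf.apply_mul_sigma_of_apply_eq_zero hf0 hσ hσσ hz h0] at h₂
  refine mul_left_cancel₀ (two_ne_zero : (2 : K) ≠ 0) ?_
  linear_combination h₁ + h₂

theorem apply_ne_zero (hf : KannappanEq σ z₀ f) (hf0 : f ≠ 0)
    (hσ : ∀ x y, σ (x * y) = σ x * σ y) (hσσ : Function.Involutive σ) (hz : ∀ x, Commute z₀ x) :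
    f z₀ ≠ 0 := by
  intro h0
  obtain ⟨a, ha⟩ : ∃ a, f a ≠ 0 := Function.ne_iff.mp hf0
  obtain ⟨b, hb⟩ := hf.exists_apply_mul_ne_zero hf0
  have hleibniz := hf.apply_mul_mul_mul_mul_of_apply_eq_zero hf0 hσ hσσ hz h0
  have hprop : ∀ x y, f (x * z₀ * z₀) * f y = f x * f (y * z₀ * z₀) := fun x y => by
    have h₁ := hleibniz (x * z₀) y
    have h₂ := hleibniz x (y * z₀)
    rw [(hz y).right_comm] at h₁
    rw [← mul_assoc] at h₂
    linear_combination h₂ - h₁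
  have hprop_mul : ∀ y, f (a * z₀ * z₀) * f (y * z₀) = f a * f y * f (z₀ * z₀) := fun y => by
    have h := hleibniz y z₀
    rw [h0] at h
    linear_combination hprop a (y * z₀) + f a * h
  have hazz : f (a * z₀ * z₀) = 0 := by
    by_contra hazz
    have hzz : f (z₀ * z₀) = 0 := by simpa [h0, hazz] using hprop_mul z₀
    simpa [hzz, hazz, hb] using hprop_mul b
  have hvanish : ∀ y, f (y * z₀ * z₀) = 0 := fun y => by simpa [hazz, ha] using (hprop a y).symm
  have hsine : ∀ x y, f (x * z₀) * f y + f x * f (y * z₀) = 0 := fun x y => by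
    rw [← hleibniz, hvanish]
  have haz : f (a * z₀) = 0 := by
    have h : 2 * f a * f (a * z₀) = 0 := by linear_combination hsine a a
    simpa [ha, two_ne_zero] using h
  simpa [haz, ha, hb] using hsine a b

theorem exists_apply_mul_eq_mul (hf : KannappanEq σ z₀ f) (hf0 : f ≠ 0)
    (hσ : ∀ x y, σ (x * y) = σ x * σ y) (hσσ : Function.Involutive σ) (hz : ∀ x, Commute z₀ x) :
    ∃ k, k * k = f z₀ ∧ ∀ x, f (x * z₀) = k * f x := by
  obtain ⟨a, ha⟩ : ∃ a, f a ≠ 0 := Function.ne_iff.mp hf0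
  have hfz := hf.apply_ne_zero hf0 hσ hσσ hz
  have hF := hf.apply_mul_mul_add_apply_sigma_mul hσ hσσ hz
  have hd : f (z₀ * z₀) + f (σ z₀ * z₀) ≠ 0 := by
    intro hd
    have h := hF a z₀
    rw [hd, mul_zero] at h
    simp [ha, hfz, two_ne_zero] at h
  obtain ⟨k, hk⟩ : ∃ k, ∀ x, f (x * z₀) = k * f x :=
    ⟨2 * f z₀ * f z₀ / (f (z₀ * z₀) + f (σ z₀ * z₀)), fun x => by
      rw [div_mul_eq_mul_div, eq_div_iff hd]
      linear_combination hF x z₀⟩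
  refine ⟨k, ?_, hk⟩
  have h := hF a a
  rw [hk a, hk (σ a), hf.apply_sigma hf0 hσσ a] at h
  refine mul_right_cancel₀ (mul_ne_zero (mul_ne_zero two_ne_zero ha) ha) ?_
  linear_combination h

end KannappanEq

end

theorem stmt4 {S : Type*} [Semigroup S] (σ : S → S) (hσ : ∀ x y, σ (x * y) = σ x * σ y) (hσσ : ∀ x, σ (σ x) = x)
    (z₀ : S) (hz : ∀ x, z₀ * x = x * z₀) (f : S → ℂ) (hf0 : f ≠ 0) (hf : ∀ x y, f (x * y * z₀) + f (x * σ y * z₀) = 2 * f x * f y)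
    (g : S → ℂ) (hg : ∀ x, g x = f (x * z₀) / f z₀) :
    (∀ x y, g (x * y) + g (x * σ y) = 2 * g x * g y) ∧ g z₀ ≠ 0 ∧
      ∀ x, g (x * z₀) = g x * g z₀ := by
  obtain ⟨k, hk2, hk⟩ := KannappanEq.exists_apply_mul_eq_mul hf hf0 hσ hσσ hz
  have hk0 : k ≠ 0 := by
    rintro rfl
    exact KannappanEq.apply_ne_zero hf hf0 hσ hσσ hz (by rw [← hk2, mul_zero])
  have hg' : ∀ x, g x = f x / k := fun x => by
    rw [hg, hk, ← hk2]
    field_simp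
  refine ⟨fun x y => ?_, ?_, fun x => ?_⟩
  · have h := hf x y
    rw [hk, hk] at h
    simp only [hg']
    field_simp
    linear_combination h
  · rw [hg', ← hk2, mul_div_cancel_right₀ k hk0]
    exact hk0
  · rw [hg', hg', hg', hk, ← hk2]
    field_simp
end

section
/- Any nonzero solution f: S → ℂ of f(xyz₀) = f(x)f(y) for all x,y ∈ S has the form f = χ(z₀)·χ, where χ: S → ℂ is a multiplicative function with χ(z₀) ≠ 0. -/
/-! Comparing `f (x * (y * z₀) * z₀)` with `f ((x * z₀) * y * z₀)` shows that right multiplication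
by the central element `z₀` scales `f` by a constant `k = f (x₀ * z₀) / f x₀`, which is nonzero.
Then `χ = f / k` is multiplicative, `χ z₀ = k`, and `f = k * χ`. -/

section CentralTwistedMultiplicative

variable {S : Type*} [Semigroup S] {z₀ : S} {f : S → ℂ}

theorem apply_mul_apply_mul_central_comm (hz : ∀ x, z₀ * x = x * z₀)
    (hf : ∀ x y, f (x * y * z₀) = f x * f y) (x y : S) :
    f x * f (y * z₀) = f (x * z₀) * f y := by
  rw [← hf, ← hf, ← hz y, ← mul_assoc]

theorem exists_apply_mul_central_eq_mul (hz : ∀ x, z₀ * x = x * z₀)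
    (hf : ∀ x y, f (x * y * z₀) = f x * f y) (hf0 : f ≠ 0) :
    ∃ k : ℂ, ∀ y, f (y * z₀) = k * f y := by
  obtain ⟨x₀, hx₀⟩ := Function.ne_iff.mp hf0
  refine ⟨f (x₀ * z₀) / f x₀, fun y => ?_⟩
  rw [div_mul_eq_mul_div, eq_div_iff hx₀, mul_comm, apply_mul_apply_mul_central_comm hz hf]

variable {k : ℂ}

theorem ne_zero_of_apply_mul_central_eq_mul (hf : ∀ x y, f (x * y * z₀) = f x * f y) (hf0 : f ≠ 0)
    (hk : ∀ y, f (y * z₀) = k * f y) : k ≠ 0 := by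
  rintro rfl
  obtain ⟨x₀, hx₀⟩ := Function.ne_iff.mp hf0
  have : f x₀ * f x₀ = 0 := by rw [← hf, hk, zero_mul]
  exact hx₀ (mul_self_eq_zero.mp this)

theorem apply_central_eq_sq (hf : ∀ x y, f (x * y * z₀) = f x * f y) (hf0 : f ≠ 0)
    (hk : ∀ y, f (y * z₀) = k * f y) : f z₀ = k ^ 2 := by
  obtain ⟨x₀, hx₀⟩ := Function.ne_iff.mp hf0
  refine mul_left_cancel₀ hx₀ ?_
  calc f x₀ * f z₀ = f (x₀ * z₀ * z₀) := (hf x₀ z₀).symm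
    _ = f x₀ * k ^ 2 := by rw [hk, hk]; ring

theorem apply_mul_div_eq_div_mul_div (hf : ∀ x y, f (x * y * z₀) = f x * f y)
    (hk : ∀ y, f (y * z₀) = k * f y) (hk0 : k ≠ 0) (x y : S) :
    f (x * y) / k = f x / k * (f y / k) := by
  have h := hf x y
  rw [hk] at h
  field_simp
  linear_combination h

end CentralTwistedMultiplicative

theorem stmt7 {S : Type*} [Semigroup S] (z₀ : S) (hz : ∀ x, z₀ * x = x * z₀)
    (f : S → ℂ) (hf0 : f ≠ 0)
    (hf : ∀ x y, f (x * y * z₀) = f x * f y) :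
    ∃ χ : S → ℂ, (∀ x y, χ (x * y) = χ x * χ y) ∧ χ z₀ ≠ 0 ∧
      ∀ x, f x = χ z₀ * χ x := by
  obtain ⟨k, hk⟩ := exists_apply_mul_central_eq_mul hz hf hf0
  have hk0 : k ≠ 0 := ne_zero_of_apply_mul_central_eq_mul hf hf0 hk
  have hχz₀ : f z₀ / k = k := by
    rw [apply_central_eq_sq hf hf0 hk, sq, mul_div_cancel_right₀ _ hk0]
  refine ⟨fun x => f x / k, apply_mul_div_eq_div_mul_div hf hk hk0, ?_, fun x => ?_⟩
  · simpa only [hχz₀] using hk0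
  · simp only [hχz₀]
    field_simp
end

section
/- If f: S → ℂ is a nonzero solution of the Van Vleck equation f(xσ(y)z₀) − f(xyz₀) = 2f(x)f(y) for all x,y ∈ S, then f(σ(x)) = −f(x) for all x ∈ S, f(z₀) ≠ 0, and f(z₀z₀) = f(σ(z₀)z₀) = 0. -/
/-!
Oddness comes from comparing the equation at `y` and at `σ y`. Evaluating the equation at the
products `x * σ y`, `x * z₀` and `y * z₀` in two ways gives the quadratic identities
`f (x z₀) f y = f x f (y z₀) - f (x σy) f z₀ = f x f (y σz₀) + f (x y) f z₀`.
If one of them collapses to `f (y z₀) = c f y` for all `y`, the equation at `(z₀, a)` forces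
`c² = -f z₀`, while `c ≠ 0` because `f ≠ 0`. This excludes `f z₀ = 0`. It also excludes
`f (z₀ z₀) ≠ 0`: then `f (y σz₀)` vanishes identically, and the equation at `(a, z₀)` gives
`c² = -2 f z₀` as well.
-/

section

variable {S : Type*} [Semigroup S]

theorem map_mul_of_central {σ : S → S}
    (hσ : (∀ x y, σ (x * y) = σ x * σ y) ∨ (∀ x y, σ (x * y) = σ y * σ x))
    {c : S} (hc : ∀ x, c * x = x * c) (y : S) : σ (y * c) = σ y * σ c := by
  rcases hσ with hmul | hanti
  · exact hmul y c
  · rw [← hc, hanti]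

theorem map_central {σ : S → S}
    (hσ : (∀ x y, σ (x * y) = σ x * σ y) ∨ (∀ x y, σ (x * y) = σ y * σ x))
    (hσσ : ∀ x, σ (σ x) = x) {c : S} (hc : ∀ x, c * x = x * c) (x : S) :
    σ c * x = x * σ c := by
  rw [← hσσ x]
  rcases hσ with hmul | hanti
  · rw [← hmul, hc, hmul]
  · rw [← hanti, ← hc, hanti]

def IsVanVleckSolution (σ : S → S) (z₀ : S) (f : S → ℂ) : Prop :=
  ∀ x y, f (x * σ y * z₀) - f (x * y * z₀) = 2 * f x * f y

namespace IsVanVleckSolution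

variable {σ : S → S} {z₀ : S} {f : S → ℂ}

theorem apply_map_eq_neg (hf : IsVanVleckSolution σ z₀ f) (hσσ : ∀ x, σ (σ x) = x)
    {a : S} (ha : f a ≠ 0) (y : S) : f (σ y) = -f y := by
  have hy := hf a y
  have hσy := hf a (σ y)
  rw [hσσ] at hσy
  have h : (2 * f a) * (f y + f (σ y)) = 0 := by linear_combination -hy - hσy
  linear_combination (mul_eq_zero.mp h).resolve_left (mul_ne_zero two_ne_zero ha)

theorem apply_mul_mul_apply_eq_sub (hf : IsVanVleckSolution σ z₀ f)
    (hσ : (∀ x y, σ (x * y) = σ x * σ y) ∨ (∀ x y, σ (x * y) = σ y * σ x))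
    (hz : ∀ x, z₀ * x = x * z₀) (x y : S) :
    f (x * z₀) * f y = f x * f (y * z₀) - f (x * σ y) * f z₀ := by
  have h₁ := hf (x * σ y) z₀
  have h₂ := hf x (y * z₀)
  have h₃ := hf (x * z₀) y
  rw [map_mul_of_central hσ hz] at h₂
  simp only [mul_assoc, hz] at h₁ h₂ h₃
  linear_combination (h₂ - h₁ - h₃) / 2

theorem apply_mul_mul_apply_eq_add (hf : IsVanVleckSolution σ z₀ f)
    (hσ : (∀ x y, σ (x * y) = σ x * σ y) ∨ (∀ x y, σ (x * y) = σ y * σ x))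
    (hσσ : ∀ x, σ (σ x) = x) (hz : ∀ x, z₀ * x = x * z₀) (x y : S) :
    f (x * z₀) * f y = f x * f (y * σ z₀) + f (x * y) * f z₀ := by
  have h₁ := hf (x * y) z₀
  have h₂ := hf x (y * σ z₀)
  have h₃ := hf (x * z₀) y
  rw [map_mul_of_central hσ (map_central hσ hσσ hz), hσσ] at h₂
  simp only [mul_assoc, hz] at h₁ h₂ h₃
  linear_combination (h₁ + h₂ - h₃) / 2

theorem apply_mul_map_eq_zero (hf : IsVanVleckSolution σ z₀ f)
    (hσ : (∀ x y, σ (x * y) = σ x * σ y) ∨ (∀ x y, σ (x * y) = σ y * σ x))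
    (hσσ : ∀ x, σ (σ x) = x) (hz : ∀ x, z₀ * x = x * z₀) {a : S} (ha : f a ≠ 0) :
    f (z₀ * σ z₀) = 0 := by
  have h := hf.apply_mul_mul_apply_eq_add hσ hσσ hz a z₀
  have h' : f a * f (z₀ * σ z₀) = 0 := by linear_combination -h
  exact (mul_eq_zero.mp h').resolve_left ha

section Scaling

variable {c : ℂ}

theorem ne_zero_of_apply_mul_eq_mul (hf : IsVanVleckSolution σ z₀ f) {a : S} (ha : f a ≠ 0)
    (hc : ∀ y, f (y * z₀) = c * f y) : c ≠ 0 := by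
  rintro rfl
  have h := hf a a
  rw [hc, hc] at h
  have h' : f a * f a = 0 := by linear_combination -h / 2
  exact ha (mul_self_eq_zero.mp h')

theorem sq_eq_neg_apply_of_apply_mul_eq_mul (hf : IsVanVleckSolution σ z₀ f)
    (hσσ : ∀ x, σ (σ x) = x) (hz : ∀ x, z₀ * x = x * z₀) {a : S} (ha : f a ≠ 0)
    (hc : ∀ y, f (y * z₀) = c * f y) : c ^ 2 = -f z₀ := by
  have hc₂ : ∀ y, f (y * (z₀ * z₀)) = c ^ 2 * f y := fun y => by
    rw [← mul_assoc, hc, hc]; ring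
  have h := hf z₀ a
  simp only [mul_assoc, hz] at h
  rw [hc₂, hc₂, hf.apply_map_eq_neg hσσ ha] at h
  have h' : (c ^ 2 + f z₀) * (2 * f a) = 0 := by linear_combination -h
  exact eq_neg_of_add_eq_zero_left
    ((mul_eq_zero.mp h').resolve_right (mul_ne_zero two_ne_zero ha))

end Scaling

theorem apply_ne_zero (hf : IsVanVleckSolution σ z₀ f)
    (hσ : (∀ x y, σ (x * y) = σ x * σ y) ∨ (∀ x y, σ (x * y) = σ y * σ x))
    (hσσ : ∀ x, σ (σ x) = x) (hz : ∀ x, z₀ * x = x * z₀) {a : S} (ha : f a ≠ 0) :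
    f z₀ ≠ 0 := by
  intro h₀
  have hc : ∀ y, f (y * z₀) = f (a * z₀) / f a * f y := fun y => by
    have h := hf.apply_mul_mul_apply_eq_sub hσ hz a y
    rw [h₀, mul_zero, sub_zero] at h
    field_simp
    linear_combination -h
  have hsq := hf.sq_eq_neg_apply_of_apply_mul_eq_mul hσσ hz ha hc
  rw [h₀, neg_zero] at hsq
  exact hf.ne_zero_of_apply_mul_eq_mul ha hc (pow_eq_zero_iff two_ne_zero |>.mp hsq)

theorem apply_mul_sub_apply_mul_map (hf : IsVanVleckSolution σ z₀ f)
    (hσ : (∀ x y, σ (x * y) = σ x * σ y) ∨ (∀ x y, σ (x * y) = σ y * σ x))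
    (hσσ : ∀ x, σ (σ x) = x) (hz : ∀ x, z₀ * x = x * z₀) (x y : S) :
    f x * (f (y * z₀) - f (y * σ z₀)) = f z₀ * (f (x * σ y) + f (x * y)) := by
  linear_combination hf.apply_mul_mul_apply_eq_add hσ hσσ hz x y -
    hf.apply_mul_mul_apply_eq_sub hσ hz x y

theorem apply_sq_mul_apply_mul_map_eq_zero (hf : IsVanVleckSolution σ z₀ f)
    (hσ : (∀ x y, σ (x * y) = σ x * σ y) ∨ (∀ x y, σ (x * y) = σ y * σ x))
    (hσσ : ∀ x, σ (σ x) = x) (hz : ∀ x, z₀ * x = x * z₀) (y : S) :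
    f (z₀ * z₀) * f (y * σ z₀) = 0 := by
  have h₁ := hf.apply_mul_sub_apply_mul_map hσ hσσ hz (z₀ * z₀) y
  have h₂ := hf.apply_mul_mul_apply_eq_add hσ hσσ hz z₀ (y * z₀)
  have h₃ := hf z₀ y
  have h₄ := hf y z₀
  simp only [mul_assoc, hz] at h₁ h₂ h₃ h₄
  linear_combination h₂ - h₁ - f z₀ * h₃ + f z₀ * h₄

theorem apply_sq_eq_zero (hf : IsVanVleckSolution σ z₀ f)
    (hσ : (∀ x y, σ (x * y) = σ x * σ y) ∨ (∀ x y, σ (x * y) = σ y * σ x))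
    (hσσ : ∀ x, σ (σ x) = x) (hz : ∀ x, z₀ * x = x * z₀) {a : S} (ha : f a ≠ 0) :
    f (z₀ * z₀) = 0 := by
  by_contra hd
  have hz₀ := hf.apply_ne_zero hσ hσσ hz ha
  have hvanish : ∀ y, f (y * σ z₀) = 0 := fun y =>
    (mul_eq_zero.mp (hf.apply_sq_mul_apply_mul_map_eq_zero hσ hσσ hz y)).resolve_left hd
  have hc : ∀ y, f (y * z₀) = f (z₀ * z₀) / f z₀ * f y := fun y => by
    have h := hf.apply_mul_mul_apply_eq_add hσ hσσ hz z₀ y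
    rw [hvanish, mul_zero, zero_add, hz y] at h
    field_simp
    linear_combination -h
  have hsq := hf.sq_eq_neg_apply_of_apply_mul_eq_mul hσσ hz ha hc
  have h := hf a z₀
  rw [mul_assoc a, ← hz, ← mul_assoc, hvanish, hc (a * z₀), hc a] at h
  have h' : f a * f z₀ = 0 := by linear_combination -h - f a * hsq
  exact hz₀ ((mul_eq_zero.mp h').resolve_left ha)

end IsVanVleckSolution

end

theorem stmt8 {S : Type*} [Semigroup S] (σ : S → S) (hσ : (∀ x y, σ (x * y) = σ x * σ y) ∨ (∀ x y, σ (x * y) = σ y * σ x))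
    (hσσ : ∀ x, σ (σ x) = x)
    (z₀ : S) (hz : ∀ x, z₀ * x = x * z₀) (f : S → ℂ) (hf0 : f ≠ 0) (hf : ∀ x y, f (x * σ y * z₀) - f (x * y * z₀) = 2 * f x * f y) :
    (∀ x, f (σ x) = -f x) ∧ f z₀ ≠ 0 ∧ f (z₀ * z₀) = 0 ∧ f (σ z₀ * z₀) = 0 := by
  have hf : IsVanVleckSolution σ z₀ f := hf
  obtain ⟨a, ha⟩ := Function.ne_iff.mp hf0
  refine ⟨hf.apply_map_eq_neg hσσ ha, hf.apply_ne_zero hσ hσσ hz ha,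
    hf.apply_sq_eq_zero hσ hσσ hz ha, ?_⟩
  rw [← hz]
  exact hf.apply_mul_map_eq_zero hσ hσσ hz ha
end

section
/- If f: S → ℂ is a nonzero solution of f(xσ(y)z₀) − f(xyz₀) = 2f(x)f(y), then g(x) := f(xz₀)/f(z₀) is a nonzero solution of d'Alembert's equation g(xy) + g(xσ(y)) = 2g(x)g(y) satisfying g(z₀) = 0 and g(z₀z₀) ≠ 0. -/
/-!
Write `z = z₀`. Taking `y` and `σ y` in the equation shows that `f` is `σ`-odd, and three
instances of the equation combine into the sine subtraction formula
`f z · f (x σ y) = f x · f (y z) - f (x z) · f y`. If `f z = 0`, this formula makes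
`y ↦ f (y z)` a multiple `c · f`, and `f` then solves `c (f (x σ y) - f (x y)) = 2 f x f y`,
which has no nonzero odd solutions. With `f z ≠ 0`, the subtraction formula gives
`f (z z) = 0` and `f (σ y z) = f (y z)`; adding it at `(x z, y)` and `(x z, σ y)` yields
d'Alembert's equation for `x ↦ f (x z)`, and `f (z z z) = - f z ^ 2` gives
`g (z z) = - f z ≠ 0`.
-/

namespace SineAddition

variable {S : Type*} [Semigroup S] {σ : S → S} {z₀ : S} {f : S → ℂ}

lemma map_mul_central
    (hσ : (∀ x y, σ (x * y) = σ x * σ y) ∨ (∀ x y, σ (x * y) = σ y * σ x))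
    (hz : ∀ x, z₀ * x = x * z₀) (y : S) : σ (y * z₀) = σ y * σ z₀ := by
  rcases hσ with hm | hm
  · exact hm y z₀
  · rw [← hz y, hm]

lemma apply_map_eq_neg (hσσ : ∀ x, σ (σ x) = x) (hf0 : f ≠ 0)
    (hf : ∀ x y, f (x * σ y * z₀) - f (x * y * z₀) = 2 * f x * f y) (y : S) :
    f (σ y) = -f y := by
  obtain ⟨a, ha⟩ : ∃ a, f a ≠ 0 := Function.ne_iff.mp hf0
  have h := hf a (σ y)
  rw [hσσ] at h
  have : 2 * f a * (f y + f (σ y)) = 0 := by linear_combination -hf a y - h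
  linear_combination (mul_eq_zero.mp this).resolve_left (mul_ne_zero two_ne_zero ha)

lemma sine_subtraction
    (hσ : (∀ x y, σ (x * y) = σ x * σ y) ∨ (∀ x y, σ (x * y) = σ y * σ x))
    (hz : ∀ x, z₀ * x = x * z₀)
    (hf : ∀ x y, f (x * σ y * z₀) - f (x * y * z₀) = 2 * f x * f y)
    (x y : S) : f z₀ * f (x * σ y) = f x * f (y * z₀) - f (x * z₀) * f y := by
  have h₁ := hf (x * z₀) y
  have h₂ := hf x (y * z₀)
  have h₃ := hf (x * σ y) z₀
  rw [map_mul_central hσ hz] at h₂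
  simp only [mul_assoc, hz] at h₁ h₂ h₃
  linear_combination (h₂ - h₃ - h₁) / 2

lemma eq_zero_of_apply_map_eq_neg
    (hσ : (∀ x y, σ (x * y) = σ x * σ y) ∨ (∀ x y, σ (x * y) = σ y * σ x))
    (hσσ : ∀ x, σ (σ x) = x) {φ : S → ℂ} (hodd : ∀ x, φ (σ x) = -φ x) {c : ℂ}
    (hφ : ∀ x y, c * (φ (x * σ y) - φ (x * y)) = 2 * φ x * φ y) : φ = 0 := by
  funext x
  suffices φ x * φ x = 0 from mul_self_eq_zero.mp this
  rcases hσ with hm | hm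
  · have h := hφ (σ x) (σ x)
    rw [← hm, ← hm] at h
    simp only [hodd] at h
    linear_combination -(hφ x x + h) / 4
  · have hfix : ∀ w, σ w = w → φ w = 0 := fun w hw => by
      have h := hodd w
      rw [hw] at h
      linear_combination h / 2
    have h := hφ (σ x) x
    rw [← hm, hodd, hodd, hfix (σ x * x) (by rw [hm, hσσ])] at h
    have h' := hφ x x
    rw [hfix (x * σ x) (by rw [hm, hσσ])] at h'
    linear_combination -(h' - h) / 4

lemma apply_central_ne_zero
    (hσ : (∀ x y, σ (x * y) = σ x * σ y) ∨ (∀ x y, σ (x * y) = σ y * σ x))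
    (hσσ : ∀ x, σ (σ x) = x) (hz : ∀ x, z₀ * x = x * z₀) (hf0 : f ≠ 0)
    (hf : ∀ x y, f (x * σ y * z₀) - f (x * y * z₀) = 2 * f x * f y) : f z₀ ≠ 0 := by
  intro h0
  obtain ⟨a, ha⟩ : ∃ a, f a ≠ 0 := Function.ne_iff.mp hf0
  have hscale : ∀ y, f (y * z₀) = f (a * z₀) / f a * f y := fun y => by
    have h := sine_subtraction hσ hz hf a y
    rw [h0] at h
    field_simp
    linear_combination -h
  refine hf0 (eq_zero_of_apply_map_eq_neg hσ hσσ (apply_map_eq_neg hσσ hf0 hf)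
    (c := f (a * z₀) / f a) ?_)
  intro x y
  rw [mul_sub, ← hscale, ← hscale, ← hf]

lemma apply_central_mul_self_eq_zero
    (hσ : (∀ x y, σ (x * y) = σ x * σ y) ∨ (∀ x y, σ (x * y) = σ y * σ x))
    (hσσ : ∀ x, σ (σ x) = x) (hz : ∀ x, z₀ * x = x * z₀) (hf0 : f ≠ 0)
    (hf : ∀ x y, f (x * σ y * z₀) - f (x * y * z₀) = 2 * f x * f y) :
    f (z₀ * z₀) = 0 := by
  have hodd := apply_map_eq_neg hσσ hf0 hf
  have hprod : ∀ y, f (z₀ * z₀) * f (y * z₀) = 0 := fun y => by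
    have h := sine_subtraction hσ hz hf z₀ (y * z₀)
    have h₁ := hf (σ y) z₀
    have h₂ := hf z₀ y
    rw [map_mul_central hσ hz] at h
    rw [hodd] at h₁
    simp only [mul_assoc, hz] at h h₁ h₂
    linear_combination h - f z₀ * h₁ - f z₀ * h₂
  by_contra hzz
  refine hf0 (funext fun x => mul_self_eq_zero.mp ?_)
  have hvanish : ∀ y, f (y * z₀) = 0 := fun y => (mul_eq_zero.mp (hprod y)).resolve_left hzz
  have h := hf x x
  rw [hvanish, hvanish] at h
  linear_combination -h / 2

lemma apply_map_mul_central_eq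
    (hσ : (∀ x y, σ (x * y) = σ x * σ y) ∨ (∀ x y, σ (x * y) = σ y * σ x))
    (hσσ : ∀ x, σ (σ x) = x) (hz : ∀ x, z₀ * x = x * z₀) (hf0 : f ≠ 0)
    (hf : ∀ x y, f (x * σ y * z₀) - f (x * y * z₀) = 2 * f x * f y) (y : S) :
    f (σ y * z₀) = f (y * z₀) := by
  refine mul_left_cancel₀ (apply_central_ne_zero hσ hσσ hz hf0 hf) ?_
  have h := sine_subtraction hσ hz hf z₀ y
  rw [apply_central_mul_self_eq_zero hσ hσσ hz hf0 hf, hz] at h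
  linear_combination h

lemma dAlembert_apply_mul_central
    (hσ : (∀ x y, σ (x * y) = σ x * σ y) ∨ (∀ x y, σ (x * y) = σ y * σ x))
    (hσσ : ∀ x, σ (σ x) = x) (hz : ∀ x, z₀ * x = x * z₀) (hf0 : f ≠ 0)
    (hf : ∀ x y, f (x * σ y * z₀) - f (x * y * z₀) = 2 * f x * f y) (x y : S) :
    f z₀ * (f (x * y * z₀) + f (x * σ y * z₀)) = 2 * f (x * z₀) * f (y * z₀) := by
  have h := sine_subtraction hσ hz hf (x * z₀) y
  have h' := sine_subtraction hσ hz hf (x * z₀) (σ y)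
  rw [hσσ, apply_map_mul_central_eq hσ hσσ hz hf0 hf, apply_map_eq_neg hσσ hf0 hf] at h'
  simp only [mul_assoc, hz] at h h' ⊢
  linear_combination h + h'

lemma apply_central_cube_eq_neg_sq
    (hσ : (∀ x y, σ (x * y) = σ x * σ y) ∨ (∀ x y, σ (x * y) = σ y * σ x))
    (hσσ : ∀ x, σ (σ x) = x) (hz : ∀ x, z₀ * x = x * z₀) (hf0 : f ≠ 0)
    (hf : ∀ x y, f (x * σ y * z₀) - f (x * y * z₀) = 2 * f x * f y) :
    f (z₀ * z₀ * z₀) = -f z₀ ^ 2 := by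
  refine mul_left_cancel₀ (apply_central_ne_zero hσ hσσ hz hf0 hf) ?_
  have h := dAlembert_apply_mul_central hσ hσσ hz hf0 hf z₀ z₀
  rw [apply_central_mul_self_eq_zero hσ hσσ hz hf0 hf] at h
  linear_combination (h - f z₀ * hf z₀ z₀) / 2

end SineAddition

open SineAddition in
theorem stmt11 {S : Type*} [Semigroup S] (σ : S → S) (hσ : (∀ x y, σ (x * y) = σ x * σ y) ∨ (∀ x y, σ (x * y) = σ y * σ x))
    (hσσ : ∀ x, σ (σ x) = x)
    (z₀ : S) (hz : ∀ x, z₀ * x = x * z₀) (f : S → ℂ) (hf0 : f ≠ 0) (hf : ∀ x y, f (x * σ y * z₀) - f (x * y * z₀) = 2 * f x * f y)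
    (g : S → ℂ) (hg : ∀ x, g x = f (x * z₀) / f z₀) :
    g ≠ 0 ∧ (∀ x y, g (x * y) + g (x * σ y) = 2 * g x * g y) ∧
      g z₀ = 0 ∧ g (z₀ * z₀) ≠ 0 := by
  have hz0 := apply_central_ne_zero hσ hσσ hz hf0 hf
  have hgzz : g (z₀ * z₀) = -f z₀ := by
    rw [hg, apply_central_cube_eq_neg_sq hσ hσσ hz hf0 hf]
    field_simp
  have hgzz0 : g (z₀ * z₀) ≠ 0 := hgzz ▸ neg_ne_zero.mpr hz0
  refine ⟨fun h => hgzz0 (congrFun h _), fun x y => ?_, ?_, hgzz0⟩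
  · simp only [hg]
    field_simp
    linear_combination dAlembert_apply_mul_central hσ hσσ hz hf0 hf x y
  · rw [hg, apply_central_mul_self_eq_zero hσ hσσ hz hf0 hf, zero_div]
end

section
/- Let g: S → ℂ satisfy d'Alembert's equation g(xy) + g(xσ(y)) = 2g(x)g(y) with g(z₀) = 0 and g(z₀z₀) ≠ 0. Then f(x) := g(xσ(z₀)) = −g(xz₀) defines a nonzero solution of the Van Vleck equation f(xσ(y)z₀) − f(xyz₀) = 2f(x)f(y), and f(xz₀)/f(z₀) = g(x) for all x ∈ S. -/
/-!
Putting `y = z₀` in d'Alembert's equation gives `g (x σ z₀) = -g (x z₀)`, and applying this twice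
(`σ z₀` is central along with `z₀`) gives `g (x σ z₀ σ z₀) = g (x z₀ z₀)`. Putting `y = z₀ z₀` then
shows `g (x z₀ z₀) = g x g (z₀ z₀)`, so right translation by `z₀²` acts on `g` as the nonzero
scalar `g (z₀ z₀)`. Both sides of the Van Vleck equation for `f` reduce to
`g (z₀ z₀) (g (x y) - g (x σ y))`: the left one by this scaling, the right one by d'Alembert's
equation at the pair `x σ z₀, y σ z₀`.
-/

section DAlembert

variable {S : Type*} [Semigroup S] {σ : S → S} {g : S → ℂ} {z : S}

theorem map_mul_comm_of_mul_comm (hσ : ∀ x y, σ (x * y) = σ x * σ y) (hσσ : ∀ x, σ (σ x) = x)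
    (hz : ∀ x, z * x = x * z) (x : S) : σ z * x = x * σ z := by
  rw [← hσσ x, ← hσ, hz, hσ, hσσ]

variable (hg : ∀ x y, g (x * y) + g (x * σ y) = 2 * g x * g y) (hgz : g z = 0)
include hg hgz

theorem dAlembert_mul_map_of_eq_zero (x : S) : g (x * σ z) = -g (x * z) := by
  linear_combination (hg x z).trans (by rw [hgz, mul_zero])

theorem dAlembert_mul_map_mul_map_of_eq_zero (hσz : σ z * z = z * σ z) (x : S) :
    g (x * σ z * σ z) = g (x * z * z) := by
  rw [dAlembert_mul_map_of_eq_zero hg hgz, mul_assoc, hσz, ← mul_assoc,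
    dAlembert_mul_map_of_eq_zero hg hgz, neg_neg]

theorem dAlembert_mul_mul_of_eq_zero (hσ : ∀ x y, σ (x * y) = σ x * σ y)
    (hσz : σ z * z = z * σ z) (x : S) : g (x * z * z) = g x * g (z * z) := by
  have h := hg x (z * z)
  rw [hσ, ← mul_assoc, ← mul_assoc, dAlembert_mul_map_mul_map_of_eq_zero hg hgz hσz] at h
  linear_combination h / 2

theorem vanVleck_of_dAlembert (hσ : ∀ x y, σ (x * y) = σ x * σ y) (hσσ : ∀ x, σ (σ x) = x)
    (hσz : ∀ x, σ z * x = x * σ z) {f : S → ℂ} (hf : ∀ x, f x = g (x * σ z)) (x y : S) :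
    f (x * σ y * z) - f (x * y * z) = 2 * f x * f y := by
  have hscale := dAlembert_mul_mul_of_eq_zero hg hgz hσ (hσz z)
  have hleft : ∀ w, f (w * z) = -(g w * g (z * z)) := fun w => by
    rw [hf, dAlembert_mul_map_of_eq_zero hg hgz, hscale]
  have hprod : x * σ z * (y * σ z) = x * y * σ z * σ z := by
    simp only [← mul_assoc, mul_assoc x (σ z) y, hσz y]
  have hprod_σ : x * σ z * (σ y * z) = x * σ y * z * σ z := by
    simp only [← mul_assoc, mul_assoc x (σ z) (σ y), hσz (σ y)]
    rw [mul_assoc _ (σ z) z, hσz z, ← mul_assoc]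
  have h := hg (x * σ z) (y * σ z)
  rw [hσ, hσσ, hprod, hprod_σ, dAlembert_mul_map_mul_map_of_eq_zero hg hgz (hσz z), hscale,
    dAlembert_mul_map_of_eq_zero hg hgz, hscale, ← hf, ← hf] at h
  rw [hleft, hleft]
  linear_combination h

end DAlembert

theorem stmt12 {S : Type*} [Semigroup S] (σ : S → S) (hσ : ∀ x y, σ (x * y) = σ x * σ y) (hσσ : ∀ x, σ (σ x) = x)
    (z₀ : S) (hz : ∀ x, z₀ * x = x * z₀) (g : S → ℂ)
    (hg : ∀ x y, g (x * y) + g (x * σ y) = 2 * g x * g y)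
    (hg0 : g z₀ = 0) (hg1 : g (z₀ * z₀) ≠ 0)
    (f : S → ℂ) (hfdef : ∀ x, f x = g (x * σ z₀)) :
    (∀ x, f x = -g (x * z₀)) ∧ f ≠ 0 ∧
      (∀ x y, f (x * σ y * z₀) - f (x * y * z₀) = 2 * f x * f y) ∧
      ∀ x, f (x * z₀) / f z₀ = g x := by
  have hσz := map_mul_comm_of_mul_comm hσ hσσ hz
  have hf : ∀ x, f x = -g (x * z₀) := fun x => by
    rw [hfdef, dAlembert_mul_map_of_eq_zero hg hg0]
  have hscale := dAlembert_mul_mul_of_eq_zero hg hg0 hσ (hσz z₀)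
  have hfz : f z₀ = -g (z₀ * z₀) := hf z₀
  refine ⟨hf, fun h => hg1 ?_, vanVleck_of_dAlembert hg hg0 hσ hσσ hσz hfdef, fun x => ?_⟩
  · simpa [hfz] using congrFun h z₀
  · rw [hf, hfz, hscale, neg_div_neg_eq, mul_div_assoc, div_self hg1, mul_one]
end

section
/- Let g: S → ℂ satisfy d'Alembert's equation g(xy) + g(xσ(y)) = 2g(x)g(y). If there exists a central element z₀ of S with g(z₀) = 0 and g(z₀z₀) ≠ 0, then there exists a nonzero multiplicative function χ: S → ℂ such that g = (χ + χ∘σ)/2. -/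
/-! Put `c = g (z₀ * z₀)` and `h x = g (x * z₀)`. Since `z₀` is central and `g z₀ = 0`, the pair
`(g, h)` satisfies the sine addition and subtraction laws `h (x y) = h x g y + g x h y`,
`h (x σy) = h x g y - g x h y`, and multiplying by `z₀` twice scales `g` by `c`. Comparing the two
laws at `x z₀` gives `c g (x y) = c g x g y + h x h y`, so with `l² = c` the function
`χ = g + h / l` is multiplicative; moreover `g ∘ σ = g` and `h ∘ σ = -h`, whence
`g = (χ + χ ∘ σ) / 2`. -/

section DAlembert

variable {S : Type*} [Semigroup S] {σ : S → S} {g : S → ℂ} {z₀ : S}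

theorem dAlembert_mul_sigma_of_eq_zero (hg : ∀ x y, g (x * y) + g (x * σ y) = 2 * g x * g y)
    (hg0 : g z₀ = 0) (x : S) : g (x * σ z₀) = -g (x * z₀) := by
  linear_combination hg x z₀ + 2 * g x * hg0

theorem dAlembert_sigma_mul_of_eq_zero (hg : ∀ x y, g (x * y) + g (x * σ y) = 2 * g x * g y)
    (hz : ∀ x, z₀ * x = x * z₀) (hg0 : g z₀ = 0) (x : S) : g (σ x * z₀) = -g (x * z₀) := by
  have h := hg z₀ x
  rw [hg0, hz x, hz (σ x)] at h
  linear_combination h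

theorem dAlembert_mul_central_add (hg : ∀ x y, g (x * y) + g (x * σ y) = 2 * g x * g y)
    (hz : ∀ x, z₀ * x = x * z₀) (x y : S) :
    g (x * y * z₀) + g (x * σ y * z₀) = 2 * g (x * z₀) * g y := by
  have h := hg (x * z₀) y
  rwa [mul_assoc x z₀ y, hz y, ← mul_assoc x y z₀,
    mul_assoc x z₀ (σ y), hz (σ y), ← mul_assoc x (σ y) z₀] at h

theorem dAlembert_mul_central_sub (hσ : ∀ x y, σ (x * y) = σ x * σ y)
    (hg : ∀ x y, g (x * y) + g (x * σ y) = 2 * g x * g y) (hg0 : g z₀ = 0) (x y : S) :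
    g (x * y * z₀) - g (x * σ y * z₀) = 2 * g x * g (y * z₀) := by
  have h := hg x (y * z₀)
  rw [hσ y z₀, ← mul_assoc x (σ y) (σ z₀), dAlembert_mul_sigma_of_eq_zero hg hg0,
    ← mul_assoc x y z₀] at h
  linear_combination h

theorem dAlembert_sine_add (hσ : ∀ x y, σ (x * y) = σ x * σ y)
    (hg : ∀ x y, g (x * y) + g (x * σ y) = 2 * g x * g y)
    (hz : ∀ x, z₀ * x = x * z₀) (hg0 : g z₀ = 0) (x y : S) :
    g (x * y * z₀) = g (x * z₀) * g y + g x * g (y * z₀) := by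
  linear_combination
    (dAlembert_mul_central_add hg hz x y + dAlembert_mul_central_sub hσ hg hg0 x y) / 2

theorem dAlembert_sine_sub (hσ : ∀ x y, σ (x * y) = σ x * σ y)
    (hg : ∀ x y, g (x * y) + g (x * σ y) = 2 * g x * g y)
    (hz : ∀ x, z₀ * x = x * z₀) (hg0 : g z₀ = 0) (x y : S) :
    g (x * σ y * z₀) = g (x * z₀) * g y - g x * g (y * z₀) := by
  linear_combination
    (dAlembert_mul_central_add hg hz x y - dAlembert_mul_central_sub hσ hg hg0 x y) / 2

theorem dAlembert_mul_central_mul_central (hσ : ∀ x y, σ (x * y) = σ x * σ y)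
    (hg : ∀ x y, g (x * y) + g (x * σ y) = 2 * g x * g y)
    (hz : ∀ x, z₀ * x = x * z₀) (hg0 : g z₀ = 0) (x : S) :
    g (x * z₀ * z₀) = g (z₀ * z₀) * g x := by
  linear_combination dAlembert_sine_add hσ hg hz hg0 x z₀ + g (x * z₀) * hg0

theorem dAlembert_comp_sigma (hσ : ∀ x y, σ (x * y) = σ x * σ y) (hσσ : ∀ x, σ (σ x) = x)
    (hg : ∀ x y, g (x * y) + g (x * σ y) = 2 * g x * g y)
    (hz : ∀ x, z₀ * x = x * z₀) (hg0 : g z₀ = 0) (hg1 : g (z₀ * z₀) ≠ 0) (x : S) :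
    g (σ x) = g x := by
  have hsub : g (x * σ z₀ * z₀) = -(g (z₀ * z₀) * g x) := by
    linear_combination dAlembert_sine_sub hσ hg hz hg0 x z₀ + g (x * z₀) * hg0
  have hodd := dAlembert_sigma_mul_of_eq_zero hg hz hg0 (x * σ z₀)
  rw [hσ x (σ z₀), hσσ z₀] at hodd
  refine mul_left_cancel₀ hg1 ?_
  rw [← dAlembert_mul_central_mul_central hσ hg hz hg0, hodd, hsub, neg_neg]

theorem dAlembert_mul_eq_add_sine_mul_sine (hσ : ∀ x y, σ (x * y) = σ x * σ y)
    (hg : ∀ x y, g (x * y) + g (x * σ y) = 2 * g x * g y)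
    (hz : ∀ x, z₀ * x = x * z₀) (hg0 : g z₀ = 0) (x y : S) :
    g (z₀ * z₀) * g (x * y) = g (z₀ * z₀) * (g x * g y) + g (x * z₀) * g (y * z₀) := by
  have hadd := dAlembert_sine_add hσ hg hz hg0 (x * z₀) y
  have hsub := dAlembert_sine_sub hσ hg hz hg0 (x * z₀) y
  rw [mul_assoc x z₀ y, hz y, ← mul_assoc x y z₀,
    dAlembert_mul_central_mul_central hσ hg hz hg0] at hadd
  rw [mul_assoc x z₀ (σ y), hz (σ y), ← mul_assoc x (σ y) z₀,
    dAlembert_mul_central_mul_central hσ hg hz hg0] at hsub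
  linear_combination (g (z₀ * z₀) * hg x y + hadd - hsub) / 2

end DAlembert

theorem stmt15 {S : Type*} [Semigroup S] (σ : S → S) (hσ : ∀ x y, σ (x * y) = σ x * σ y) (hσσ : ∀ x, σ (σ x) = x)
    (g : S → ℂ) (hg : ∀ x y, g (x * y) + g (x * σ y) = 2 * g x * g y)
    (z₀ : S) (hz : ∀ x, z₀ * x = x * z₀) (hg0 : g z₀ = 0) (hg1 : g (z₀ * z₀) ≠ 0) :
    ∃ χ : S → ℂ, χ ≠ 0 ∧ (∀ x y, χ (x * y) = χ x * χ y) ∧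
      ∀ x, g x = (χ x + χ (σ x)) / 2 := by
  obtain ⟨l, hl⟩ := IsAlgClosed.exists_pow_nat_eq (g (z₀ * z₀)) two_pos
  have hl0 : l ≠ 0 := by rintro rfl; exact hg1 (by rw [← hl]; ring)
  refine ⟨fun x => g x + g (x * z₀) / l, fun h => hg1 ?_, fun x y => ?_, fun x => ?_⟩
  · have h0 := congrFun h z₀
    simp only [Pi.zero_apply, hg0, zero_add, div_eq_zero_iff, hl0, or_false] at h0
    exact h0
  · have hmul := dAlembert_mul_eq_add_sine_mul_sine hσ hg hz hg0 x y
    rw [← hl] at hmul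
    field_simp
    linear_combination hmul + l * dAlembert_sine_add hσ hg hz hg0 x y
  · simp only [dAlembert_comp_sigma hσ hσσ hg hz hg0 hg1,
      dAlembert_sigma_mul_of_eq_zero hg hz hg0]
    ring
end

section
/- Let δ > 0 and let f: S → ℂ be unbounded with |f(xyz₀) + f(xσ(y)z₀) − 2f(x)f(y)| ≤ δ for all x,y ∈ S. Then f(σ(x)) = f(x) for all x ∈ S. -/
/-! Replacing `y` by `σ y` in the defining inequality only swaps the two terms
`f (x * y * z₀)` and `f (x * σ y * z₀)`, so subtracting the two instances gives
`‖f x‖ * ‖f y - f (σ y)‖ ≤ δ` for all `x`. If `f (σ y) ≠ f y`, this bounds `f`. -/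

theorem norm_mul_norm_sub_comp_involution_le {S 𝕜 : Type*} [Mul S] [RCLike 𝕜] {σ : S → S}
    (hσσ : ∀ x, σ (σ x) = x) {z₀ : S} {δ : ℝ} {f : S → 𝕜}
    (hf : ∀ x y, ‖f (x * y * z₀) + f (x * σ y * z₀) - 2 * f x * f y‖ ≤ δ) (x y : S) :
    ‖f x‖ * ‖f y - f (σ y)‖ ≤ δ := by
  have hσy := hf x (σ y)
  rw [hσσ] at hσy
  have hy := hf x y
  have key : (2 : 𝕜) * (f x * (f y - f (σ y))) =
      (f (x * σ y * z₀) + f (x * y * z₀) - 2 * f x * f (σ y)) -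
        (f (x * y * z₀) + f (x * σ y * z₀) - 2 * f x * f y) := by
    ring
  have : 2 * (‖f x‖ * ‖f y - f (σ y)‖) ≤ 2 * δ := by
    calc 2 * (‖f x‖ * ‖f y - f (σ y)‖) = ‖(2 : 𝕜) * (f x * (f y - f (σ y)))‖ := by
          rw [norm_mul, norm_mul, RCLike.norm_two]
      _ ≤ _ := key ▸ norm_sub_le _ _
      _ ≤ 2 * δ := by linarith
  linarith

theorem stmt16_general {S : Type*} [Semigroup S] (σ : S → S)
    (hσσ : ∀ x, σ (σ x) = x)
    (z₀ : S) (δ : ℝ) (f : S → ℂ) (hub : ¬∃ M : ℝ, ∀ x, ‖f x‖ ≤ M)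
    (hf : ∀ x y, ‖f (x * y * z₀) + f (x * σ y * z₀) - 2 * f x * f y‖ ≤ δ) :
    ∀ x, f (σ x) = f x := by
  intro y
  by_contra hne
  have hgap : 0 < ‖f y - f (σ y)‖ := norm_pos_iff.mpr (sub_ne_zero.mpr (Ne.symm hne))
  exact hub ⟨δ / ‖f y - f (σ y)‖, fun x =>
    (le_div_iff₀ hgap).mpr (norm_mul_norm_sub_comp_involution_le hσσ hf x y)⟩

theorem stmt16 {S : Type*} [Semigroup S] (σ : S → S) (hσ : (∀ x y, σ (x * y) = σ x * σ y) ∨ (∀ x y, σ (x * y) = σ y * σ x))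
    (hσσ : ∀ x, σ (σ x) = x)
    (z₀ : S) (hz : ∀ x, z₀ * x = x * z₀) (δ : ℝ) (hδ : 0 < δ) (f : S → ℂ) (hub : ¬∃ M : ℝ, ∀ x, ‖f x‖ ≤ M)
    (hf : ∀ x y, ‖f (x * y * z₀) + f (x * σ y * z₀) - 2 * f x * f y‖ ≤ δ) :
    ∀ x, f (σ x) = f x :=
  stmt16_general σ hσσ z₀ δ f hub hf
end

section
/- Let δ > 0 and let f: S → ℂ be unbounded with |f(xyz₀) + f(xσ(y)z₀) − 2f(x)f(y)| ≤ δ for all x,y ∈ S. Then f(z₀) ≠ 0, and moreover |f(xσ(z₀)z₀) − f(x)f(z₀)| ≤ δ/2 and |f(xz₀z₀) − f(x)f(z₀)| ≤ 3δ/2 for all x ∈ S. -/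
/-!
If `f` is unbounded, a bounded function `D` for which `D (x*y*z₀) + D (x*σ y*z₀) - 2 f(y) D(x)` is
bounded in `x, y` must vanish: look at it for `y` with `|f y|` large. For central `k`, the
translate `x ↦ f (x*k*z₀)` commutes with `g ↦ g (·*y*z₀) + g (·*σ y*z₀)`, so this applies to the
defect `x ↦ f (x*k*z₀) + f (x*σ k*z₀) - 2 f(x) f(k)` when `k` and `σ k` are central, and to
`μ f (·*k*z₀) - ν f` as soon as it is bounded. With `c = σ z₀ * z₀` one gets
`f (x*c*z₀) = f c f x` and then `f (x*z₀) f (y*σ z₀*z₀) = f c f x f y`, so `x ↦ f (x*σ z₀*z₀)` is a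
multiple `a f`. Both `a f (x*z₀)` and `(2 f z₀ - a) f (x*z₀)` equal `f c f x`, whence `a = f z₀`:
the inequalities hold with `0` on the left.
-/

theorem eq_zero_of_forall_norm_mul_le {α 𝕜 : Type*} [NormedDivisionRing 𝕜] {f : α → 𝕜}
    (hf : ¬∃ M : ℝ, ∀ x, ‖f x‖ ≤ M) {w : 𝕜} {C : ℝ} (h : ∀ x, ‖f x * w‖ ≤ C) : w = 0 := by
  by_contra hw
  refine hf ⟨C / ‖w‖, fun x => ?_⟩
  rw [le_div_iff₀ (norm_pos_iff.2 hw), ← norm_mul]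
  exact h x

namespace Kannappan

section Involution

variable {S : Type*} [Semigroup S] {σ : S → S}

theorem sigma_mul_comm_of_central
    (hσ : (∀ x y, σ (x * y) = σ x * σ y) ∨ (∀ x y, σ (x * y) = σ y * σ x))
    (hσσ : ∀ x, σ (σ x) = x) {k : S} (hk : ∀ a, k * a = a * k) (a : S) :
    σ k * a = a * σ k := by
  rcases hσ with h | h
  · rw [← hσσ a, ← h, hk, h]
  · rw [← hσσ a, ← h, ← hk, h]

theorem sigma_mul_of_central
    (hσ : (∀ x y, σ (x * y) = σ x * σ y) ∨ (∀ x y, σ (x * y) = σ y * σ x))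
    {k : S} (hk : ∀ a, σ k * a = a * σ k) (x : S) : σ (x * k) = σ x * σ k := by
  rcases hσ with h | h
  · exact h x k
  · rw [h, hk]

theorem sigma_mul_self_mul_comm
    (hσ : (∀ x y, σ (x * y) = σ x * σ y) ∨ (∀ x y, σ (x * y) = σ y * σ x))
    (hσσ : ∀ x, σ (σ x) = x) {z₀ : S} (hz : ∀ a, z₀ * a = a * z₀) (a : S) :
    σ z₀ * z₀ * a = a * (σ z₀ * z₀) :=
  Commute.mul_left (sigma_mul_comm_of_central hσ hσσ hz a) (hz a)

theorem sigma_sigma_mul_self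
    (hσ : (∀ x y, σ (x * y) = σ x * σ y) ∨ (∀ x y, σ (x * y) = σ y * σ x))
    (hσσ : ∀ x, σ (σ x) = x) {z₀ : S} (hz : ∀ a, z₀ * a = a * z₀) :
    σ (σ z₀ * z₀) = σ z₀ * z₀ := by
  have hσz := sigma_mul_comm_of_central hσ hσσ hz
  rw [sigma_mul_of_central hσ hσz, hσσ, hσz]

end Involution

section Stability

variable {S : Type*} [Semigroup S] {σ : S → S} {z₀ : S} {f : S → ℂ} {δ : ℝ}

def defect (σ : S → S) (z₀ : S) (f : S → ℂ) (x y : S) : ℂ :=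
  f (x * y * z₀) + f (x * σ y * z₀) - 2 * f x * f y

theorem mul_mul_right_comm_of_central (hz : ∀ a, z₀ * a = a * z₀) {k : S}
    (hk : ∀ a, k * a = a * k) (x y : S) : x * y * z₀ * k * z₀ = x * k * z₀ * y * z₀ := by
  rw [Commute.right_comm (hz k) (x * y), ← Commute.right_comm (hk y) x,
    Commute.right_comm (hz y) (x * k)]

theorem apply_sigma (hσσ : ∀ x, σ (σ x) = x) (hub : ¬∃ M : ℝ, ∀ x, ‖f x‖ ≤ M)
    (hf : ∀ x y, ‖defect σ z₀ f x y‖ ≤ δ) (y : S) : f (σ y) = f y := by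
  have h : 2 * (f (σ y) - f y) = 0 := eq_zero_of_forall_norm_mul_le hub fun t => calc
    ‖f t * (2 * (f (σ y) - f y))‖ = ‖defect σ z₀ f t y - defect σ z₀ f t (σ y)‖ := by
      rw [defect, defect, hσσ]; ring_nf
    _ ≤ δ + δ := (norm_sub_le _ _).trans (add_le_add (hf _ _) (hf _ _))
  linear_combination h / 2

theorem eq_zero_of_approx_eigen (hub : ¬∃ M : ℝ, ∀ x, ‖f x‖ ≤ M) {D : S → ℂ} {B C : ℝ}
    (hD : ∀ x, ‖D x‖ ≤ B) (hT : ∀ x y, ‖D (x * y * z₀) + D (x * σ y * z₀) - 2 * f y * D x‖ ≤ C)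
    (x : S) : D x = 0 := by
  have h : 2 * D x = 0 := eq_zero_of_forall_norm_mul_le hub fun y => calc
    ‖f y * (2 * D x)‖ = ‖D (x * y * z₀) + D (x * σ y * z₀) -
        (D (x * y * z₀) + D (x * σ y * z₀) - 2 * f y * D x)‖ := by ring_nf
    _ ≤ B + B + C := (norm_sub_le _ _).trans
        (add_le_add ((norm_add_le _ _).trans (add_le_add (hD _) (hD _))) (hT x y))
  linear_combination h / 2

theorem defect_eq_zero_of_central (hz : ∀ a, z₀ * a = a * z₀) (hub : ¬∃ M : ℝ, ∀ x, ‖f x‖ ≤ M)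
    (hf : ∀ x y, ‖defect σ z₀ f x y‖ ≤ δ) {k : S} (hk : ∀ a, k * a = a * k)
    (hσk : ∀ a, σ k * a = a * σ k) (x : S) : defect σ z₀ f x k = 0 :=
  eq_zero_of_approx_eigen (σ := σ) hub (hf · k) (fun x y => calc
    _ = ‖defect σ z₀ f (x * k * z₀) y + defect σ z₀ f (x * σ k * z₀) y -
          2 * f k * defect σ z₀ f x y‖ := by
      simp only [defect]
      rw [mul_mul_right_comm_of_central hz hk, mul_mul_right_comm_of_central hz hk,
        mul_mul_right_comm_of_central hz hσk, mul_mul_right_comm_of_central hz hσk]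
      ring_nf
    _ ≤ δ + δ + ‖2 * f k‖ * δ := (norm_sub_le _ _).trans <| add_le_add
          ((norm_add_le _ _).trans (add_le_add (hf _ _) (hf _ _)))
          ((norm_mul_le _ _).trans (mul_le_mul_of_nonneg_left (hf _ _) (norm_nonneg _)))) x

theorem mul_apply_eq_of_forall_norm_sub_le (hz : ∀ a, z₀ * a = a * z₀)
    (hub : ¬∃ M : ℝ, ∀ x, ‖f x‖ ≤ M) (hf : ∀ x y, ‖defect σ z₀ f x y‖ ≤ δ) {k : S}
    (hk : ∀ a, k * a = a * k) {μ ν : ℂ} {B : ℝ} (hB : ∀ x, ‖μ * f (x * k * z₀) - ν * f x‖ ≤ B)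
    (x : S) : μ * f (x * k * z₀) = ν * f x :=
  sub_eq_zero.1 <| eq_zero_of_approx_eigen (σ := σ) hub hB (fun x y => calc
    _ = ‖μ * defect σ z₀ f (x * k * z₀) y - ν * defect σ z₀ f x y‖ := by
      simp only [defect]
      rw [mul_mul_right_comm_of_central hz hk, mul_mul_right_comm_of_central hz hk]
      ring_nf
    _ ≤ ‖μ‖ * δ + ‖ν‖ * δ := (norm_sub_le _ _).trans <| add_le_add
          ((norm_mul_le _ _).trans (mul_le_mul_of_nonneg_left (hf _ _) (norm_nonneg _)))
          ((norm_mul_le _ _).trans (mul_le_mul_of_nonneg_left (hf _ _) (norm_nonneg _)))) x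

theorem apply_eq_zero_of_forall_apply_mul_mul_eq_zero (hub : ¬∃ M : ℝ, ∀ x, ‖f x‖ ≤ M)
    (hf : ∀ x y, ‖defect σ z₀ f x y‖ ≤ δ) {x : S} (h : ∀ y, f (x * y * z₀) = 0) : f x = 0 := by
  have h2 : 2 * f x = 0 := eq_zero_of_forall_norm_mul_le hub fun y => calc
    ‖f y * (2 * f x)‖ = ‖defect σ z₀ f x y‖ := by
      rw [defect, h, h, ← norm_neg]; ring_nf
    _ ≤ δ := hf x y
  linear_combination h2 / 2

theorem exists_apply_mul_ne_zero (hub : ¬∃ M : ℝ, ∀ x, ‖f x‖ ≤ M)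
    (hf : ∀ x y, ‖defect σ z₀ f x y‖ ≤ δ) : ∃ x, f (x * z₀) ≠ 0 := by
  by_contra! h
  refine hub ⟨0, fun x => ?_⟩
  rw [apply_eq_zero_of_forall_apply_mul_mul_eq_zero hub hf fun y => h (x * y), norm_zero]

theorem apply_mul_sigma_mul_self_mul
    (hσ : (∀ x y, σ (x * y) = σ x * σ y) ∨ (∀ x y, σ (x * y) = σ y * σ x))
    (hσσ : ∀ x, σ (σ x) = x) (hz : ∀ a, z₀ * a = a * z₀) (hub : ¬∃ M : ℝ, ∀ x, ‖f x‖ ≤ M)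
    (hf : ∀ x y, ‖defect σ z₀ f x y‖ ≤ δ) (x : S) :
    f (x * (σ z₀ * z₀) * z₀) = f (σ z₀ * z₀) * f x := by
  have hc := sigma_mul_self_mul_comm hσ hσσ hz
  have hσc := sigma_sigma_mul_self hσ hσσ hz
  have h := defect_eq_zero_of_central hz hub hf hc (by rwa [hσc]) x
  rw [defect, hσc] at h
  linear_combination h / 2

theorem apply_mul_mul_apply_mul_sigma_mul
    (hσ : (∀ x y, σ (x * y) = σ x * σ y) ∨ (∀ x y, σ (x * y) = σ y * σ x))
    (hσσ : ∀ x, σ (σ x) = x) (hz : ∀ a, z₀ * a = a * z₀) (hub : ¬∃ M : ℝ, ∀ x, ‖f x‖ ≤ M)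
    (hf : ∀ x y, ‖defect σ z₀ f x y‖ ≤ δ) (x y : S) :
    f (x * z₀) * f (y * σ z₀ * z₀) = f (σ z₀ * z₀) * f x * f y := by
  have hc := sigma_mul_self_mul_comm hσ hσσ hz
  have hσc := sigma_sigma_mul_self hσ hσσ hz
  have hR := apply_mul_sigma_mul_self_mul hσ hσσ hz hub hf
  have hmove : ∀ w, x * z₀ * (w * (σ z₀ * z₀)) * z₀ = x * w * z₀ * (σ z₀ * z₀) * z₀ := fun w => by
    rw [← mul_assoc, Commute.right_comm (hz w) x]
  have h := mul_apply_eq_of_forall_norm_sub_le hz hub hf (sigma_mul_comm_of_central hσ hσσ hz)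
    (μ := 2 * f (x * z₀)) (ν := 2 * f (σ z₀ * z₀) * f x) (fun y => calc
      _ = ‖f (σ z₀ * z₀) * defect σ z₀ f x y - defect σ z₀ f (x * z₀) (y * (σ z₀ * z₀))‖ := by
        rw [defect, defect, sigma_mul_of_central hσ (by rwa [hσc]), hσc, hmove, hmove, hR, hR,
          ← mul_assoc y]
        ring_nf
      _ ≤ ‖f (σ z₀ * z₀)‖ * δ + δ := (norm_sub_le _ _).trans <| add_le_add
          ((norm_mul_le _ _).trans (mul_le_mul_of_nonneg_left (hf _ _) (norm_nonneg _))) (hf _ _))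
    y
  linear_combination h / 2

theorem apply_mul_sigma_mul
    (hσ : (∀ x y, σ (x * y) = σ x * σ y) ∨ (∀ x y, σ (x * y) = σ y * σ x))
    (hσσ : ∀ x, σ (σ x) = x) (hz : ∀ a, z₀ * a = a * z₀) (hub : ¬∃ M : ℝ, ∀ x, ‖f x‖ ≤ M)
    (hf : ∀ x y, ‖defect σ z₀ f x y‖ ≤ δ) (x : S) : f (x * σ z₀ * z₀) = f z₀ * f x := by
  have hσz := sigma_mul_comm_of_central hσ hσσ hz
  have hR := apply_mul_sigma_mul_self_mul hσ hσσ hz hub hf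
  obtain ⟨x₀, hx₀⟩ := exists_apply_mul_ne_zero hub hf
  set a := f (σ z₀ * z₀) * f x₀ / f (x₀ * z₀)
  have hV : ∀ x, f (x * σ z₀ * z₀) = a * f x := fun x => by
    rw [div_mul_eq_mul_div, eq_div_iff hx₀, mul_comm,
      apply_mul_mul_apply_mul_sigma_mul hσ hσσ hz hub hf]
  have hU : ∀ x, f (x * z₀ * z₀) = (2 * f z₀ - a) * f x := fun x => by
    have h := defect_eq_zero_of_central hz hub hf hz hσz x
    rw [defect, hV] at h
    linear_combination h
  have hα : a * f (x₀ * z₀) = f (σ z₀ * z₀) * f x₀ := by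
    rw [← hV, mul_assoc x₀, hz, hR]
  -- `f (σ x₀ * σ z₀) = f (x₀ * z₀)` since `σ (σ x₀ * σ z₀) = x₀ * z₀`
  have hβ : (2 * f z₀ - a) * f (x₀ * z₀) = f (σ z₀ * z₀) * f x₀ := by
    have h := hU (σ x₀ * σ z₀)
    rw [mul_assoc (σ x₀) (σ z₀) z₀, hR, apply_sigma hσσ hub hf x₀,
      ← apply_sigma hσσ hub hf (σ x₀ * σ z₀), sigma_mul_of_central hσ (by rwa [hσσ]), hσσ, hσσ] at h
    exact h.symm
  have ha : a = f z₀ := by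
    have := mul_right_cancel₀ hx₀ (hα.trans hβ.symm)
    linear_combination this / 2
  rw [hV, ha]

end Stability

end Kannappan

theorem stmt17_general {S : Type*} [Semigroup S] (σ : S → S) (hσ : (∀ x y, σ (x * y) = σ x * σ y) ∨ (∀ x y, σ (x * y) = σ y * σ x))
    (hσσ : ∀ x, σ (σ x) = x)
    (z₀ : S) (hz : ∀ x, z₀ * x = x * z₀) (δ : ℝ) (f : S → ℂ) (hub : ¬∃ M : ℝ, ∀ x, ‖f x‖ ≤ M)
    (hf : ∀ x y, ‖f (x * y * z₀) + f (x * σ y * z₀) - 2 * f x * f y‖ ≤ δ) :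
    f z₀ ≠ 0 ∧
      (∀ x, ‖f (x * σ z₀ * z₀) - f x * f z₀‖ ≤ δ / 2) ∧
      ∀ x, ‖f (x * z₀ * z₀) - f x * f z₀‖ ≤ 3 * δ / 2 := by
  have hV := Kannappan.apply_mul_sigma_mul hσ hσσ hz hub hf
  have hU : ∀ x, f (x * z₀ * z₀) = f z₀ * f x := fun x => by
    have h := Kannappan.defect_eq_zero_of_central hz hub hf hz
      (Kannappan.sigma_mul_comm_of_central hσ hσσ hz) x
    rw [Kannappan.defect, hV] at h
    linear_combination h
  have hz₀ : f z₀ ≠ 0 := by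
    intro h0
    obtain ⟨x₀, hx₀⟩ := Kannappan.exists_apply_mul_ne_zero hub hf
    refine hx₀ (Kannappan.apply_eq_zero_of_forall_apply_mul_mul_eq_zero hub hf fun y => ?_)
    rw [Commute.right_comm (hz y), hU, h0, zero_mul]
  have hδ : 0 ≤ δ := (norm_nonneg _).trans (hf z₀ z₀)
  refine ⟨hz₀, fun x => ?_, fun x => ?_⟩
  · rw [hV, mul_comm, sub_self, norm_zero]; linarith
  · rw [hU, mul_comm, sub_self, norm_zero]; linarith

theorem stmt17 {S : Type*} [Semigroup S] (σ : S → S) (hσ : (∀ x y, σ (x * y) = σ x * σ y) ∨ (∀ x y, σ (x * y) = σ y * σ x))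
    (hσσ : ∀ x, σ (σ x) = x)
    (z₀ : S) (hz : ∀ x, z₀ * x = x * z₀) (δ : ℝ) (hδ : 0 < δ) (f : S → ℂ) (hub : ¬∃ M : ℝ, ∀ x, ‖f x‖ ≤ M)
    (hf : ∀ x y, ‖f (x * y * z₀) + f (x * σ y * z₀) - 2 * f x * f y‖ ≤ δ) :
    f z₀ ≠ 0 ∧
      (∀ x, ‖f (x * σ z₀ * z₀) - f x * f z₀‖ ≤ δ / 2) ∧
      ∀ x, ‖f (x * z₀ * z₀) - f x * f z₀‖ ≤ 3 * δ / 2 :=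
  stmt17_general σ hσ hσσ z₀ hz δ f hub hf
end

section
/- Let δ > 0. If f: S → ℂ satisfies |f(xyz₀) + f(xσ(y)z₀) − 2f(x)f(y)| ≤ δ for all x,y ∈ S, then either f is bounded with |f(x)| ≤ (1 + √(1 + 2δ))/2 for all x ∈ S, or f satisfies f(xyz₀) + f(xσ(y)z₀) = 2f(x)f(y) for all x,y ∈ S. -/
/-!
If `‖f x₀‖ > c := (1 + √(1 + 2δ)) / 2`, the diagonal estimate
`‖f (x x z₀)‖ + ‖f (x σ(x) z₀)‖ ≥ 2 ‖f x‖² - δ` pushes `‖f‖` past every bound, because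
`c² = c + δ / 2`. For unbounded `f`, a constant `w` with `a ↦ w f(a)` bounded must vanish.
Expanding `f (a z₀)` against the approximate equation in two ways shows that
`a ↦ f (a z₀) - β f(a)` is bounded for some `β`, and then that `f (x z₀) = β f(x)` exactly. The
equation becomes `β (f (x y) + f (x σ(y))) ≈ 2 f(x) f(y)`, and writing `f(a)` times its defect at
`(x, y)` as a combination of defects with coefficients independent of `a` shows that the defect
vanishes. For an antimorphism `σ` this needs `f ∘ σ = f`, which makes `f (u v) - f (v u)` bounded.
-/

open Asymptotics Filter Set

section Bounded

variable {α : Type*}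

lemma isBigO_one_of_norm_le {g : α → ℂ} {C : ℝ} (h : ∀ a, ‖g a‖ ≤ C) :
    g =O[⊤] (1 : α → ℝ) :=
  isBigO_of_le' (c := C) ⊤ fun a => by simpa using h a

lemma eq_zero_of_isBigO_one_const_mul {f : α → ℂ} (hf : ¬ f =O[⊤] (1 : α → ℝ)) {w : ℂ}
    (h : (fun a => w * f a) =O[⊤] (1 : α → ℝ)) : w = 0 := by
  by_contra hw
  exact hf (by simpa [hw] using h.const_mul_left w⁻¹)

lemma exists_isBigO_one_sub_const_mul {f g : α → ℂ} (hf : ¬ f =O[⊤] (1 : α → ℝ)) {w w' : ℂ}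
    (hw' : w' ≠ 0) (h : (fun a => w * g a - w' * f a) =O[⊤] (1 : α → ℝ)) :
    ∃ β, (fun a => g a - β * f a) =O[⊤] (1 : α → ℝ) := by
  have hw : w ≠ 0 := by
    rintro rfl
    refine hw' (neg_eq_zero.1 (eq_zero_of_isBigO_one_const_mul hf ?_))
    simpa using h
  exact ⟨w' / w, (h.const_mul_left w⁻¹).congr_left fun a => by field_simp⟩

/-- `c = (1 + √(1 + 2δ)) / 2` is the fixed point `c ^ 2 = c + δ / 2` of `t ↦ t ^ 2 - δ / 2`; above
`c` this map at least doubles the distance to `c`. -/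
lemma not_bddAbove_range_of_sq_sub_half_le {u : α → ℝ} {δ : ℝ} (hδ : 0 ≤ δ)
    (hu : ∀ a, ∃ b, u a ^ 2 - δ / 2 ≤ u b) {x₀ : α} (hx₀ : (1 + √(1 + 2 * δ)) / 2 < u x₀) :
    ¬ BddAbove (range u) := by
  intro hB
  set c := (1 + √(1 + 2 * δ)) / 2
  have hs : √(1 + 2 * δ) ^ 2 = 1 + 2 * δ := Real.sq_sqrt (by linarith)
  have hs1 : 1 ≤ √(1 + 2 * δ) := Real.one_le_sqrt.2 (by linarith)
  have hc1 : 1 ≤ c := by simp only [c]; linarith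
  have hc : c ^ 2 = c + δ / 2 := by simp only [c]; nlinarith
  have hM : u x₀ ≤ sSup (range u) := le_csSup hB ⟨x₀, rfl⟩
  obtain ⟨_, ⟨a, rfl⟩, ha⟩ := exists_lt_of_lt_csSup (range_nonempty_iff_nonempty.2 ⟨x₀⟩)
    (show (sSup (range u) + c) / 2 < sSup (range u) by linarith)
  obtain ⟨b, hb⟩ := hu a
  have hbM : u b ≤ sSup (range u) := le_csSup hB ⟨b, rfl⟩
  nlinarith [mul_nonneg (sub_nonneg.2 (by linarith : c ≤ u a)) (by linarith : (0:ℝ) ≤ u a + c - 2)]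

end Bounded

lemma sq_sub_half_le_norm_or_of_norm_le {p q r : ℂ} {δ : ℝ} (h : ‖p + q - 2 * r * r‖ ≤ δ) :
    ‖r‖ ^ 2 - δ / 2 ≤ ‖p‖ ∨ ‖r‖ ^ 2 - δ / 2 ≤ ‖q‖ := by
  have h2 : ‖2 * r * r‖ = 2 * ‖r‖ ^ 2 := by simp [sq]; ring
  have h3 := norm_sub_le (p + q) (p + q - 2 * r * r)
  rw [sub_sub_cancel, h2] at h3
  by_contra! hc
  linarith [hc.1, hc.2, norm_add_le p q]

section Kannappan

variable {S : Type*} [Semigroup S] {σ : S → S} {z₀ : S} {f : S → ℂ} {δ : ℝ}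

def kannappanDefect (σ : S → S) (z₀ : S) (f : S → ℂ) (x y : S) : ℂ :=
  f (x * y * z₀) + f (x * σ y * z₀) - 2 * f x * f y

lemma not_isBigO_one_of_kannappanDefect_le (hδ : 0 ≤ δ)
    (hf : ∀ x y, ‖kannappanDefect σ z₀ f x y‖ ≤ δ) {x₀ : S}
    (hx₀ : (1 + √(1 + 2 * δ)) / 2 < ‖f x₀‖) : ¬ f =O[⊤] (1 : S → ℝ) := by
  intro hb
  obtain ⟨C, hC⟩ := isBigO_top.1 hb
  refine not_bddAbove_range_of_sq_sub_half_le (u := fun a => ‖f a‖) hδ (fun a => ?_) hx₀ ⟨C, ?_⟩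
  · exact (sq_sub_half_le_norm_or_of_norm_le (hf a a)).elim (⟨_, ·⟩) (⟨_, ·⟩)
  · rintro _ ⟨a, rfl⟩
    simpa using hC a

lemma apply_mul_central_eq_of_isBigO_one (hz : ∀ x, z₀ * x = x * z₀)
    (hf : ∀ x y, ‖kannappanDefect σ z₀ f x y‖ ≤ δ) (hunb : ¬ f =O[⊤] (1 : S → ℝ)) {β : ℂ}
    (hβ : (fun a => f (a * z₀) - β * f a) =O[⊤] (1 : S → ℝ)) (x : S) :
    f (x * z₀) = β * f x := by
  have hD (p q : S → S) : (fun a => kannappanDefect σ z₀ f (p a) (q a)) =O[⊤] (1 : S → ℝ) :=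
    isBigO_one_of_norm_le fun a => hf _ _
  have hE (k : S → S) : (fun a => f (k a * z₀) - β * f (k a)) =O[⊤] (1 : S → ℝ) :=
    hβ.comp_tendsto (k := k) tendsto_top
  have key (a : S) : (f (x * z₀) - β * f x) * f a =
      2⁻¹ * (β * kannappanDefect σ z₀ f x a + (f (x * a * z₀ * z₀) - β * f (x * a * z₀))
        + (f (x * σ a * z₀ * z₀) - β * f (x * σ a * z₀)) - kannappanDefect σ z₀ f (x * z₀) a) := by
    simp only [kannappanDefect, mul_assoc, hz]
    ring
  refine sub_eq_zero.1 (eq_zero_of_isBigO_one_const_mul hunb ?_)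
  rw [funext key]
  exact (((((hD _ _).const_mul_left β).add (hE _)).add (hE _)).sub (hD _ _)).const_mul_left _

lemma isBigO_one_central_shift_of_morphism (hm : ∀ x y, σ (x * y) = σ x * σ y)
    (hσσ : ∀ x, σ (σ x) = x) (hz : ∀ x, z₀ * x = x * z₀)
    (hf : ∀ x y, ‖kannappanDefect σ z₀ f x y‖ ≤ δ) (u y : S) :
    (fun a => 2 * (f (u * y) + f (u * σ y)) * f (a * z₀) - 4 * (f u * f y) * f a)
      =O[⊤] (1 : S → ℝ) := by
  have hD (p q : S → S) : (fun a => kannappanDefect σ z₀ f (p a) (q a)) =O[⊤] (1 : S → ℝ) :=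
    isBigO_one_of_norm_le fun a => hf _ _
  have key (a : S) : 2 * (f (u * y) + f (u * σ y)) * f (a * z₀) - 4 * (f u * f y) * f a =
      kannappanDefect σ z₀ f (a * u * z₀) y - kannappanDefect σ z₀ f (a * z₀) (u * y)
      + (kannappanDefect σ z₀ f (a * σ u * z₀) y - kannappanDefect σ z₀ f (a * z₀) (u * σ y))
      + 2 * f y * kannappanDefect σ z₀ f a u := by
    simp only [kannappanDefect, hm, hσσ, mul_assoc, hz]
    ring
  rw [funext key]
  exact (((hD _ _).sub (hD _ _)).add ((hD _ _).sub (hD _ _))).add ((hD _ _).const_mul_left _)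

lemma isBigO_one_central_shift_of_antimorphism (ha : ∀ x y, σ (x * y) = σ y * σ x)
    (hσσ : ∀ x, σ (σ x) = x) (hz : ∀ x, z₀ * x = x * z₀)
    (hf : ∀ x y, ‖kannappanDefect σ z₀ f x y‖ ≤ δ) (u y : S) :
    (fun a => 2 * (f (u * y) + f (u * σ y) + f (σ u * y) + f (σ u * σ y)) * f (a * z₀)
      - 8 * (f u * f y) * f a) =O[⊤] (1 : S → ℝ) := by
  have hD (p q : S → S) : (fun a => kannappanDefect σ z₀ f (p a) (q a)) =O[⊤] (1 : S → ℝ) :=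
    isBigO_one_of_norm_le fun a => hf _ _
  have key (a : S) : 2 * (f (u * y) + f (u * σ y) + f (σ u * y) + f (σ u * σ y)) * f (a * z₀)
        - 8 * (f u * f y) * f a =
      kannappanDefect σ z₀ f (a * u * z₀) y - kannappanDefect σ z₀ f (a * z₀) (u * y)
      + (kannappanDefect σ z₀ f (a * σ u * z₀) y - kannappanDefect σ z₀ f (a * z₀) (σ u * σ y))
      + (kannappanDefect σ z₀ f (a * y * z₀) u - kannappanDefect σ z₀ f (a * z₀) (u * σ y))
      + (kannappanDefect σ z₀ f (a * σ y * z₀) u - kannappanDefect σ z₀ f (a * z₀) (σ u * y))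
      + 2 * f y * kannappanDefect σ z₀ f a u + 2 * f u * kannappanDefect σ z₀ f a y := by
    simp only [kannappanDefect, ha, hσσ, mul_assoc, hz]
    ring
  rw [funext key]
  exact (((((hD _ _).sub (hD _ _)).add ((hD _ _).sub (hD _ _))).add ((hD _ _).sub (hD _ _))).add
    ((hD _ _).sub (hD _ _))).add ((hD _ _).const_mul_left _) |>.add ((hD _ _).const_mul_left _)

lemma exists_apply_mul_central_eq_const_mul
    (hσ : (∀ x y, σ (x * y) = σ x * σ y) ∨ (∀ x y, σ (x * y) = σ y * σ x))
    (hσσ : ∀ x, σ (σ x) = x) (hz : ∀ x, z₀ * x = x * z₀)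
    (hf : ∀ x y, ‖kannappanDefect σ z₀ f x y‖ ≤ δ) (hunb : ¬ f =O[⊤] (1 : S → ℝ)) :
    ∃ β, ∀ x, f (x * z₀) = β * f x := by
  obtain ⟨x₀, hx₀⟩ : ∃ x₀, f x₀ ≠ 0 := by
    by_contra! h
    exact hunb (isBigO_one_of_norm_le (C := 0) fun a => by simp [h a])
  obtain ⟨w, w', hw', hb⟩ : ∃ w w' : ℂ, w' ≠ 0 ∧
      (fun a => w * f (a * z₀) - w' * f a) =O[⊤] (1 : S → ℝ) := by
    rcases hσ with hm | ha
    · exact ⟨_, _, by simp [hx₀], isBigO_one_central_shift_of_morphism hm hσσ hz hf x₀ x₀⟩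
    · exact ⟨_, _, by simp [hx₀], isBigO_one_central_shift_of_antimorphism ha hσσ hz hf x₀ x₀⟩
  obtain ⟨β, hβ⟩ := exists_isBigO_one_sub_const_mul hunb hw' hb
  exact ⟨β, apply_mul_central_eq_of_isBigO_one hz hf hunb hβ⟩

end Kannappan

section DAlembert

variable {S : Type*} [Semigroup S] {σ : S → S} {β : ℂ} {f : S → ℂ} {δ : ℝ}

def dAlembertDefect (σ : S → S) (β : ℂ) (f : S → ℂ) (x y : S) : ℂ :=
  β * f (x * y) + β * f (x * σ y) - 2 * f x * f y

lemma kannappanDefect_eq_dAlembertDefect {z₀ : S} (hβ : ∀ x, f (x * z₀) = β * f x) (x y : S) :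
    kannappanDefect σ z₀ f x y = dAlembertDefect σ β f x y := by
  simp only [kannappanDefect, dAlembertDefect, hβ]

lemma apply_involution_eq_of_dAlembertDefect_le (hσσ : ∀ x, σ (σ x) = x)
    (hf : ∀ x y, ‖dAlembertDefect σ β f x y‖ ≤ δ) (hunb : ¬ f =O[⊤] (1 : S → ℝ)) (v : S) :
    f (σ v) = f v := by
  have hD (p q : S → S) : (fun a => dAlembertDefect σ β f (p a) (q a)) =O[⊤] (1 : S → ℝ) :=
    isBigO_one_of_norm_le fun a => hf _ _
  have key (a : S) : (f (σ v) - f v) * f a =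
      2⁻¹ * (dAlembertDefect σ β f a v - dAlembertDefect σ β f a (σ v)) := by
    simp only [dAlembertDefect, hσσ]
    ring
  refine sub_eq_zero.1 (eq_zero_of_isBigO_one_const_mul hunb ?_)
  rw [funext key]
  exact ((hD _ _).sub (hD _ _)).const_mul_left _

lemma dAlembertDefect_eq_zero_of_morphism (hm : ∀ x y, σ (x * y) = σ x * σ y)
    (hσσ : ∀ x, σ (σ x) = x) (hf : ∀ x y, ‖dAlembertDefect σ β f x y‖ ≤ δ)
    (hunb : ¬ f =O[⊤] (1 : S → ℝ)) (x y : S) : dAlembertDefect σ β f x y = 0 := by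
  have hD (p q : S → S) : (fun a => dAlembertDefect σ β f (p a) (q a)) =O[⊤] (1 : S → ℝ) :=
    isBigO_one_of_norm_le fun a => hf _ _
  have key (a : S) : dAlembertDefect σ β f x y * f a =
      2⁻¹ * (β * dAlembertDefect σ β f x (y * a) - β * dAlembertDefect σ β f (x * y) a
        + (β * dAlembertDefect σ β f x (y * σ a) - β * dAlembertDefect σ β f (x * σ y) a)
        + 2 * f x * dAlembertDefect σ β f y a) := by
    simp only [dAlembertDefect, hm, hσσ, mul_assoc]
    ring
  refine eq_zero_of_isBigO_one_const_mul hunb ?_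
  rw [funext key]
  exact ((((hD _ _).const_mul_left _).sub ((hD _ _).const_mul_left _)).add
    (((hD _ _).const_mul_left _).sub ((hD _ _).const_mul_left _))).add
    ((hD _ _).const_mul_left _) |>.const_mul_left _

lemma dAlembertDefect_eq_zero_of_antimorphism (ha : ∀ x y, σ (x * y) = σ y * σ x)
    (hσσ : ∀ x, σ (σ x) = x) (hf : ∀ x y, ‖dAlembertDefect σ β f x y‖ ≤ δ)
    (hunb : ¬ f =O[⊤] (1 : S → ℝ)) (x y : S) : dAlembertDefect σ β f x y = 0 := by
  have hD (p q : S → S) : (fun a => dAlembertDefect σ β f (p a) (q a)) =O[⊤] (1 : S → ℝ) :=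
    isBigO_one_of_norm_le fun a => hf _ _
  have hrev (u v : S) : f (u * v) = f (σ v * σ u) := by
    rw [← apply_involution_eq_of_dAlembertDefect_le hσσ hf hunb (σ v * σ u), ha, hσσ, hσσ]
  have hC (p q : S → S) :
      (fun a => β * f (p a * q a) - β * f (q a * p a)) =O[⊤] (1 : S → ℝ) := by
    refine isBigO_one_of_norm_le (C := δ + δ) fun a => ?_
    have e : β * f (p a * q a) - β * f (q a * p a) =
        dAlembertDefect σ β f (p a) (q a) - dAlembertDefect σ β f (q a) (p a) := by
      simp only [dAlembertDefect, hrev (p a) (σ (q a)), hσσ]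
      ring
    exact e ▸ (norm_sub_le _ _).trans (add_le_add (hf _ _) (hf _ _))
  have key (a : S) : dAlembertDefect σ β f x y * f a =
      2⁻¹ * (β * dAlembertDefect σ β f (a * x) y - β * dAlembertDefect σ β f a (x * y)
        + (β * dAlembertDefect σ β f (σ a * x) y - β * dAlembertDefect σ β f a (x * σ y))
        + 2 * f y * dAlembertDefect σ β f a x
        - 2 * f y * (β * f (a * σ x) - β * f (σ x * a))
        + β * (β * f (x * y * σ a) - β * f (σ a * (x * y)))
        + β * (β * f (x * σ y * σ a) - β * f (σ a * (x * σ y)))) := by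
    have g1 : f (a * (σ y * σ x)) = f (x * (y * σ a)) :=
      (hrev _ _).trans (by simp only [ha, hσσ, mul_assoc])
    have g2 : f (a * (y * σ x)) = f (x * (σ y * σ a)) :=
      (hrev _ _).trans (by simp only [ha, hσσ, mul_assoc])
    have g3 : f (σ a * x) = f (σ x * a) :=
      (hrev _ _).trans (by simp only [hσσ])
    simp only [dAlembertDefect, ha, hσσ, mul_assoc]
    rw [g1, g2, g3]
    ring
  refine eq_zero_of_isBigO_one_const_mul hunb ?_
  rw [funext key]
  exact (((((((hD _ _).const_mul_left _).sub ((hD _ _).const_mul_left _)).add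
    (((hD _ _).const_mul_left _).sub ((hD _ _).const_mul_left _))).add
    ((hD _ _).const_mul_left _)).sub ((hC _ _).const_mul_left _)).add
    ((hC _ _).const_mul_left _)).add ((hC _ _).const_mul_left _) |>.const_mul_left _

end DAlembert

theorem stmt18 {S : Type*} [Semigroup S] (σ : S → S) (hσ : (∀ x y, σ (x * y) = σ x * σ y) ∨ (∀ x y, σ (x * y) = σ y * σ x))
    (hσσ : ∀ x, σ (σ x) = x)
    (z₀ : S) (hz : ∀ x, z₀ * x = x * z₀) (δ : ℝ) (hδ : 0 < δ) (f : S → ℂ)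
    (hf : ∀ x y, ‖f (x * y * z₀) + f (x * σ y * z₀) - 2 * f x * f y‖ ≤ δ) :
    (∀ x, ‖f x‖ ≤ (1 + Real.sqrt (1 + 2 * δ)) / 2) ∨
      ∀ x y, f (x * y * z₀) + f (x * σ y * z₀) = 2 * f x * f y := by
  refine or_iff_not_imp_left.2 fun hbd => ?_
  obtain ⟨x₀, hx₀⟩ := not_forall.1 hbd
  have hK : ∀ x y, ‖kannappanDefect σ z₀ f x y‖ ≤ δ := hf
  have hunb := not_isBigO_one_of_kannappanDefect_le hδ.le hK (not_le.1 hx₀)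
  obtain ⟨β, hβ⟩ := exists_apply_mul_central_eq_const_mul hσ hσσ hz hK hunb
  have hD : ∀ x y, ‖dAlembertDefect σ β f x y‖ ≤ δ := fun x y =>
    kannappanDefect_eq_dAlembertDefect hβ x y ▸ hK x y
  intro x y
  rw [← sub_eq_zero]
  change kannappanDefect σ z₀ f x y = 0
  rw [kannappanDefect_eq_dAlembertDefect hβ]
  rcases hσ with hm | ha
  · exact dAlembertDefect_eq_zero_of_morphism hm hσσ hD hunb x y
  · exact dAlembertDefect_eq_zero_of_antimorphism ha hσσ hD hunb x y
end

section
/- Let δ > 0. If f: S → ℂ satisfies |f(xσ(y)z₀) − f(xyz₀) − 2f(x)f(y)| ≤ δ for all x,y ∈ S, then either f is bounded with |f(x)| ≤ (1 + √(1 + 2δ))/2 for all x ∈ S, or f satisfies f(xσ(y)z₀) − f(xyz₀) = 2f(x)f(y) for all x,y ∈ S. -/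
/-!
Write `D(x, y)` for the defect `f(xσ(y)z₀) - f(xyz₀) - 2f(x)f(y)`, so `‖D‖ ≤ δ`. Since
`2‖f a‖² ≤ ‖f(aσ(a)z₀)‖ + ‖f(aaz₀)‖ + δ` and `B := (1 + √(1 + 2δ))/2` solves `B² - B = δ/2`,
a single value `‖f a‖ > B` propagates to values `‖f(uz₀)‖` whose distance to `B` at least doubles
at each step, so `f` is unbounded on `Sz₀`.

In the unbounded case, centrality of `z₀` and the (anti)morphism property of `σ` give an identity
`2 f(a) D(x, y) - G(x, y) H(a) = (a combination of defects)`, bounded uniformly in `a`.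
Cross-multiplying two instances eliminates `H`; as `f` is unbounded this forces
`D(x, y) G(x', y') = D(x', y') G(x, y)`, and since `D` is bounded while `G` is not, `D = 0`.
-/

theorem eq_zero_of_forall_norm_mul_le_s19 {𝕜 α : Type*} [NormedField 𝕜] {F : α → 𝕜}
    (hF : ∀ M, ∃ a, M ≤ ‖F a‖) {c : 𝕜} {K : ℝ} (hK : ∀ a, ‖c * F a‖ ≤ K) : c = 0 := by
  by_contra hc
  have hc' : 0 < ‖c‖ := norm_pos_iff.mpr hc
  obtain ⟨a, ha⟩ := hF ((K + 1) / ‖c‖)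
  have : K + 1 ≤ ‖c * F a‖ := by
    rw [norm_mul, ← div_le_iff₀' hc']
    exact ha
  linarith [hK a]

theorem eq_zero_of_bounded_of_mul_sub_mul_bounded {𝕜 α ι : Type*} [NormedField 𝕜]
    {F : α → 𝕜} {G D : ι → 𝕜} {H : α → 𝕜} {δ : ℝ}
    (hF : ∀ M, ∃ a, M ≤ ‖F a‖) (hG : ∀ M, ∃ i, M ≤ ‖G i‖) (hD : ∀ i, ‖D i‖ ≤ δ)
    (hFG : ∀ i, ∃ K, ∀ a, ‖F a * D i - G i * H a‖ ≤ K) (i : ι) : D i = 0 := by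
  have hcomm : ∀ j, D i * G j - D j * G i = 0 := by
    intro j
    obtain ⟨Ki, hKi⟩ := hFG i
    obtain ⟨Kj, hKj⟩ := hFG j
    refine eq_zero_of_forall_norm_mul_le_s19 hF (K := Ki * ‖G j‖ + Kj * ‖G i‖) fun a => ?_
    -- the terms `G i * G j * H a` cancel
    have key : (D i * G j - D j * G i) * F a =
        (F a * D i - G i * H a) * G j - (F a * D j - G j * H a) * G i := by ring
    rw [key]
    exact norm_sub_le_of_le
      ((norm_mul _ _).trans_le (by gcongr; exact hKi a))
      ((norm_mul _ _).trans_le (by gcongr; exact hKj a))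
  refine eq_zero_of_forall_norm_mul_le_s19 hG (K := δ * ‖G i‖) fun j => ?_
  rw [sub_eq_zero.mp (hcomm j), norm_mul]
  gcongr
  exact hD j

theorem exists_le_of_sq_sub_le {α : Type*} {g : α → ℝ} {B : ℝ} (hB : 1 ≤ B)
    (hstep : ∀ a, ∃ b, g a ^ 2 - (B ^ 2 - B) ≤ g b) {a₀ : α} (ha₀ : B < g a₀) (M : ℝ) :
    ∃ a, M ≤ g a := by
  set ε := g a₀ - B
  have hε : 0 < ε := sub_pos.mpr ha₀
  -- `t ↦ t ^ 2 - (B ^ 2 - B)` at least doubles the distance of `t ≥ B` to `B`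
  have hgrow : ∀ n : ℕ, ∃ a, B + 2 ^ n * ε ≤ g a := by
    intro n
    induction n with
    | zero => exact ⟨a₀, by simp [ε]⟩
    | succ n ih =>
      obtain ⟨a, ha⟩ := ih
      obtain ⟨b, hb⟩ := hstep a
      have hs : 0 < 2 ^ n * ε := by positivity
      refine ⟨b, le_trans ?_ hb⟩
      rw [pow_succ, mul_right_comm]
      nlinarith [mul_le_mul ha ha (by positivity) (by linarith), mul_le_mul_of_nonneg_right hB hs.le]
  obtain ⟨n, hn⟩ := pow_unbounded_of_one_lt ((M - B) / ε) one_lt_two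
  obtain ⟨a, ha⟩ := hgrow n
  refine ⟨a, le_trans ?_ ha⟩
  rw [div_lt_iff₀ hε] at hn
  linarith

section VanVleck

variable {S : Type*} [Semigroup S] (σ : S → S) (z₀ : S) (f : S → ℂ)

def vanVleckDefect (x y : S) : ℂ :=
  f (x * σ y * z₀) - f (x * y * z₀) - 2 * f x * f y

variable {σ z₀ f}

theorem exists_sq_sub_le_norm_mul {δ : ℝ} (hf : ∀ x y, ‖vanVleckDefect σ z₀ f x y‖ ≤ δ)
    (a : S) : ∃ u, ‖f a‖ ^ 2 - δ / 2 ≤ ‖f (u * z₀)‖ := by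
  have hsq : 2 * ‖f a‖ ^ 2 ≤ ‖f (a * σ a * z₀)‖ + ‖f (a * a * z₀)‖ + δ := by
    have h : 2 * f a * f a =
        f (a * σ a * z₀) - f (a * a * z₀) - vanVleckDefect σ z₀ f a a := by
      rw [vanVleckDefect]; ring
    calc 2 * ‖f a‖ ^ 2 = ‖2 * f a * f a‖ := by simp [sq, mul_assoc]
      _ ≤ _ := h ▸ norm_sub_le_of_le (norm_sub_le _ _) (hf a a)
  by_cases hle : ‖f a‖ ^ 2 - δ / 2 ≤ ‖f (a * σ a * z₀)‖
  · exact ⟨a * σ a, hle⟩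
  · exact ⟨a * a, by linarith⟩

theorem exists_le_norm_mul_of_lt_norm {δ : ℝ} (hf : ∀ x y, ‖vanVleckDefect σ z₀ f x y‖ ≤ δ)
    {a₀ : S} (ha₀ : (1 + √(1 + 2 * δ)) / 2 < ‖f a₀‖) (M : ℝ) : ∃ u, M ≤ ‖f (u * z₀)‖ := by
  set B := (1 + √(1 + 2 * δ)) / 2 with hBdef
  have hδ : 0 ≤ δ := (norm_nonneg _).trans (hf a₀ a₀)
  have hB : 1 ≤ B := by
    have : 1 ≤ √(1 + 2 * δ) := Real.one_le_sqrt.mpr (by linarith)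
    rw [hBdef]; linarith
  have hBsq : B ^ 2 - B = δ / 2 := by
    have := Real.sq_sqrt (show 0 ≤ 1 + 2 * δ by linarith)
    rw [hBdef]; linear_combination this / 4
  obtain ⟨u₀, hu₀⟩ := exists_sq_sub_le_norm_mul hf a₀
  refine exists_le_of_sq_sub_le (g := fun u => ‖f (u * z₀)‖) hB (fun u => ?_) (a₀ := u₀) ?_ M
  · rw [hBsq]
    exact exists_sq_sub_le_norm_mul hf (u * z₀)
  · nlinarith

theorem vanVleckDefect_eq_of_map_mul (hσ : ∀ x y, σ (x * y) = σ x * σ y)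
    (hσσ : ∀ x, σ (σ x) = x) (hz : ∀ x, z₀ * x = x * z₀) (a x y : S) :
    2 * f a * vanVleckDefect σ z₀ f x y - 2 * f (x * σ y) * (f (a * z₀) - f (σ a * z₀)) =
      vanVleckDefect σ z₀ f (x * y * z₀) a - vanVleckDefect σ z₀ f (x * σ y * z₀) a +
        2 * f x * vanVleckDefect σ z₀ f y a + vanVleckDefect σ z₀ f x (y * σ a * z₀) -
        vanVleckDefect σ z₀ f x (y * a * z₀) - vanVleckDefect σ z₀ f (x * σ y) (σ a * z₀) +
        vanVleckDefect σ z₀ f (x * σ y) (a * z₀) := by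
  have hzz : ∀ u v, u * z₀ * v = u * v * z₀ := fun u v => by rw [mul_assoc, hz, mul_assoc]
  simp only [vanVleckDefect, hσ, hσσ, ← mul_assoc, hzz]
  ring

theorem vanVleckDefect_eq_of_map_mul_rev (hσ : ∀ x y, σ (x * y) = σ y * σ x)
    (hσσ : ∀ x, σ (σ x) = x) (hz : ∀ x, z₀ * x = x * z₀) (a x y : S) :
    2 * f a * vanVleckDefect σ z₀ f x y -
        2 * f (x * z₀) * (f (a * y) - f (y * a) + f (σ y * a) + f (y * σ a)) =
      vanVleckDefect σ z₀ f (x * y * z₀) a - vanVleckDefect σ z₀ f (x * σ y * z₀) a +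
        2 * f y * vanVleckDefect σ z₀ f x a + vanVleckDefect σ z₀ f (x * σ a * z₀) y -
        vanVleckDefect σ z₀ f (x * a * z₀) y + vanVleckDefect σ z₀ f (x * z₀) (a * y) -
        vanVleckDefect σ z₀ f (x * z₀) (y * a) + vanVleckDefect σ z₀ f (x * z₀) (σ y * a) +
        vanVleckDefect σ z₀ f (x * z₀) (y * σ a) := by
  have hzz : ∀ u v, u * z₀ * v = u * v * z₀ := fun u v => by rw [mul_assoc, hz, mul_assoc]
  simp only [vanVleckDefect, hσ, hσσ, ← mul_assoc, hzz]
  ring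

theorem norm_two_mul_vanVleckDefect_le {δ : ℝ} (hf : ∀ x y, ‖vanVleckDefect σ z₀ f x y‖ ≤ δ)
    (w x y : S) : ‖2 * f w * vanVleckDefect σ z₀ f x y‖ ≤ 2 * ‖f w‖ * δ := by
  rw [norm_mul, norm_mul, Complex.norm_two]
  gcongr
  exact hf x y

theorem exists_le_norm_two_mul {α : Type*} {g : α → ℂ} (hg : ∀ M, ∃ a, M ≤ ‖g a‖) (M : ℝ) :
    ∃ a, M ≤ ‖2 * g a‖ := by
  obtain ⟨a, ha⟩ := hg M
  refine ⟨a, ?_⟩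
  rw [norm_mul, Complex.norm_two]
  linarith [norm_nonneg (g a)]

theorem vanVleckDefect_eq_zero_of_map_mul (hσ : ∀ x y, σ (x * y) = σ x * σ y)
    (hσσ : ∀ x, σ (σ x) = x) (hz : ∀ x, z₀ * x = x * z₀) {δ : ℝ}
    (hf : ∀ x y, ‖vanVleckDefect σ z₀ f x y‖ ≤ δ) (hunb : ∀ M, ∃ u, M ≤ ‖f (u * z₀)‖)
    (x y : S) : vanVleckDefect σ z₀ f x y = 0 := by
  have hF : ∀ M, ∃ a, M ≤ ‖2 * f a‖ := fun M =>
    let ⟨u, hu⟩ := exists_le_norm_two_mul hunb M; ⟨u * z₀, hu⟩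
  have hG : ∀ M, ∃ p : S × S, M ≤ ‖2 * f (p.1 * σ p.2)‖ := fun M =>
    let ⟨u, hu⟩ := exists_le_norm_two_mul hunb M; ⟨(u, σ z₀), by rwa [hσσ]⟩
  refine eq_zero_of_bounded_of_mul_sub_mul_bounded hF hG (fun p => hf p.1 p.2)
    (H := fun a => f (a * z₀) - f (σ a * z₀))
    (fun p => ⟨(6 + 2 * ‖f p.1‖) * δ, fun a => ?_⟩) (x, y)
  rw [vanVleckDefect_eq_of_map_mul hσ hσσ hz]
  calc _ ≤ δ + δ + 2 * ‖f p.1‖ * δ + δ + δ + δ + δ :=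
        norm_add_le_of_le (norm_sub_le_of_le (norm_sub_le_of_le (norm_add_le_of_le
          (norm_add_le_of_le (norm_sub_le_of_le (hf _ _) (hf _ _))
            (norm_two_mul_vanVleckDefect_le hf _ _ _)) (hf _ _)) (hf _ _)) (hf _ _)) (hf _ _)
    _ = (6 + 2 * ‖f p.1‖) * δ := by ring

theorem vanVleckDefect_eq_zero_of_map_mul_rev (hσ : ∀ x y, σ (x * y) = σ y * σ x)
    (hσσ : ∀ x, σ (σ x) = x) (hz : ∀ x, z₀ * x = x * z₀) {δ : ℝ}
    (hf : ∀ x y, ‖vanVleckDefect σ z₀ f x y‖ ≤ δ) (hunb : ∀ M, ∃ u, M ≤ ‖f (u * z₀)‖)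
    (x y : S) : vanVleckDefect σ z₀ f x y = 0 := by
  have hF : ∀ M, ∃ a, M ≤ ‖2 * f a‖ := fun M =>
    let ⟨u, hu⟩ := exists_le_norm_two_mul hunb M; ⟨u * z₀, hu⟩
  refine eq_zero_of_bounded_of_mul_sub_mul_bounded hF (exists_le_norm_two_mul hunb)
    (fun x => hf x y) (H := fun a => f (a * y) - f (y * a) + f (σ y * a) + f (y * σ a))
    (fun x => ⟨(8 + 2 * ‖f y‖) * δ, fun a => ?_⟩) x
  rw [vanVleckDefect_eq_of_map_mul_rev hσ hσσ hz]
  calc _ ≤ δ + δ + 2 * ‖f y‖ * δ + δ + δ + δ + δ + δ + δ :=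
        norm_add_le_of_le (norm_add_le_of_le (norm_sub_le_of_le (norm_add_le_of_le
          (norm_sub_le_of_le (norm_add_le_of_le (norm_add_le_of_le
            (norm_sub_le_of_le (hf _ _) (hf _ _)) (norm_two_mul_vanVleckDefect_le hf _ _ _))
            (hf _ _)) (hf _ _)) (hf _ _)) (hf _ _)) (hf _ _)) (hf _ _)
    _ = (8 + 2 * ‖f y‖) * δ := by ring

end VanVleck

theorem stmt19_general {S : Type*} [Semigroup S] (σ : S → S) (hσ : (∀ x y, σ (x * y) = σ x * σ y) ∨ (∀ x y, σ (x * y) = σ y * σ x))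
    (hσσ : ∀ x, σ (σ x) = x)
    (z₀ : S) (hz : ∀ x, z₀ * x = x * z₀) (δ : ℝ) (f : S → ℂ)
    (hf : ∀ x y, ‖f (x * σ y * z₀) - f (x * y * z₀) - 2 * f x * f y‖ ≤ δ) :
    (∀ x, ‖f x‖ ≤ (1 + Real.sqrt (1 + 2 * δ)) / 2) ∨
      ∀ x y, f (x * σ y * z₀) - f (x * y * z₀) = 2 * f x * f y := by
  by_cases hbdd : ∀ x, ‖f x‖ ≤ (1 + Real.sqrt (1 + 2 * δ)) / 2
  · exact Or.inl hbdd
  push Not at hbdd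
  obtain ⟨a₀, ha₀⟩ := hbdd
  have hunb := exists_le_norm_mul_of_lt_norm hf ha₀
  refine Or.inr fun x y => sub_eq_zero.mp ?_
  rcases hσ with hmul | hrev
  · exact vanVleckDefect_eq_zero_of_map_mul hmul hσσ hz hf hunb x y
  · exact vanVleckDefect_eq_zero_of_map_mul_rev hrev hσσ hz hf hunb x y

theorem stmt19 {S : Type*} [Semigroup S] (σ : S → S) (hσ : (∀ x y, σ (x * y) = σ x * σ y) ∨ (∀ x y, σ (x * y) = σ y * σ x))
    (hσσ : ∀ x, σ (σ x) = x)
    (z₀ : S) (hz : ∀ x, z₀ * x = x * z₀) (δ : ℝ) (hδ : 0 < δ) (f : S → ℂ)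
    (hf : ∀ x y, ‖f (x * σ y * z₀) - f (x * y * z₀) - 2 * f x * f y‖ ≤ δ) :
    (∀ x, ‖f x‖ ≤ (1 + Real.sqrt (1 + 2 * δ)) / 2) ∨
      ∀ x y, f (x * σ y * z₀) - f (x * y * z₀) = 2 * f x * f y :=
  stmt19_general σ hσ hσσ z₀ hz δ f hf
end
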